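/- arXiv:1309.1659 — 9 statements merged into one kernel-verified Lean document; each statement's English description precedes it below -/
import Mathlib

section
/- Let π : H → B be a partial representation of a Hopf algebra H on a unital algebra B. Then for all h ∈ H: π(S(h₍₁₎))π(h₍₂₎)π(S(h₍₃₎)) = π(S(h)) and π(h₍₁₎)π(S(h₍₂₎))π(h₍₃₎) = π(h) (using Sweedler notation for the comultiplication). -/
/-! (PR5), resp. (PR3), moves the last factor inside: the left side becomes
`π(S h₍₁₎) π(h₍₂₎ S h₍₃₎)`, resp. `π(h₍₁₎) π(S h₍₂₎ h₍₃₎)`. By coassociativity this is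
`π(S h₍₁₎) π(h₍₂₎₍₁₎ S h₍₂₎₍₂₎)`, and the antipode axiom collapses the second factor to
`ε(h₍₂₎) π(1) = ε(h₍₂₎)`, so the counit law leaves `π(S h)`, resp. `π(h)`. -/

open TensorProduct BigOperators HopfAlgebra

variable (k : Type) [CommRing k]

/-- A partial representation of a Hopf algebra `H` on an algebra `B` (axioms (PR1)-(PR5)),
stated using arbitrary finite Sweedler decompositions of the comultiplication. -/
def IsPartialRep {H : Type} [Ring H] [HopfAlgebra k H]
    {B : Type} [Ring B] [Algebra k B] (π : H →ₗ[k] B) : Prop :=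
  -- (PR1)
  π 1 = 1 ∧
  -- (PR2) : π(h)π(x₍₁₎)π(S(x₍₂₎)) = π(h x₍₁₎)π(S(x₍₂₎))
  (∀ (h x : H) (n : ℕ) (x1 x2 : Fin n → H),
    Coalgebra.comul (R := k) x = ∑ i, x1 i ⊗ₜ[k] x2 i →
    π h * ∑ i, π (x1 i) * π (antipode (R := k) (x2 i)) =
      ∑ i, π (h * x1 i) * π (antipode (R := k) (x2 i))) ∧
  -- (PR3) : π(h₍₁₎)π(S(h₍₂₎))π(x) = π(h₍₁₎)π(S(h₍₂₎) x)
  (∀ (h x : H) (n : ℕ) (h1 h2 : Fin n → H),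
    Coalgebra.comul (R := k) h = ∑ i, h1 i ⊗ₜ[k] h2 i →
    (∑ i, π (h1 i) * π (antipode (R := k) (h2 i))) * π x =
      ∑ i, π (h1 i) * π (antipode (R := k) (h2 i) * x)) ∧
  -- (PR4) : π(h)π(S(x₍₁₎))π(x₍₂₎) = π(h S(x₍₁₎))π(x₍₂₎)
  (∀ (h x : H) (n : ℕ) (x1 x2 : Fin n → H),
    Coalgebra.comul (R := k) x = ∑ i, x1 i ⊗ₜ[k] x2 i →
    π h * ∑ i, π (antipode (R := k) (x1 i)) * π (x2 i) =
      ∑ i, π (h * antipode (R := k) (x1 i)) * π (x2 i)) ∧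
  -- (PR5) : π(S(h₍₁₎))π(h₍₂₎)π(x) = π(S(h₍₁₎))π(h₍₂₎ x)
  (∀ (h x : H) (n : ℕ) (h1 h2 : Fin n → H),
    Coalgebra.comul (R := k) h = ∑ i, h1 i ⊗ₜ[k] h2 i →
    (∑ i, π (antipode (R := k) (h1 i)) * π (h2 i)) * π x =
      ∑ i, π (antipode (R := k) (h1 i)) * π (h2 i * x))

variable {k}

section Sweedler

variable {R : Type*} [CommSemiring R] {C : Type*} [AddCommMonoid C] [Module R C] [Coalgebra R C]

theorem sum_sum_tmul_tmul_eq_sum_tmul_comul {x : C} {n : ℕ} {x₁ x₂ : Fin n → C}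
    (hx : Coalgebra.comul (R := R) x = ∑ i, x₁ i ⊗ₜ[R] x₂ i)
    {m : Fin n → ℕ} {c d : (i : Fin n) → Fin (m i) → C}
    (hcd : ∀ i, Coalgebra.comul (R := R) (x₁ i) = ∑ j, c i j ⊗ₜ[R] d i j) :
    ∑ i, ∑ j, c i j ⊗ₜ[R] (d i j ⊗ₜ[R] x₂ i) =
      ∑ i, x₁ i ⊗ₜ[R] Coalgebra.comul (R := R) (x₂ i) := by
  simpa only [hx, map_sum, LinearMap.rTensor_tmul, LinearMap.lTensor_tmul, hcd,
    TensorProduct.sum_tmul, TensorProduct.assoc_tmul] using Coalgebra.coassoc_apply (R := R) x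

theorem sum_counit_smul_eq_of_comul_eq {x : C} {n : ℕ} {x₁ x₂ : Fin n → C}
    (hx : Coalgebra.comul (R := R) x = ∑ i, x₁ i ⊗ₜ[R] x₂ i) :
    ∑ i, Coalgebra.counit (R := R) (x₂ i) • x₁ i = x := by
  simpa [hx] using congrArg (TensorProduct.rid R C) (Coalgebra.lTensor_counit_comul (R := R) x)

variable {A : Type*} [Semiring A] [Algebra R A]

theorem sum_sum_mul_eq_of_map_comul_eq_counit_smul_one (f : C →ₗ[R] A)
    {g : C ⊗[R] C →ₗ[R] A}
    (hg : ∀ y, g (Coalgebra.comul (R := R) y) = Coalgebra.counit (R := R) y • 1)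
    {x : C} {n : ℕ} {x₁ x₂ : Fin n → C}
    (hx : Coalgebra.comul (R := R) x = ∑ i, x₁ i ⊗ₜ[R] x₂ i)
    {m : Fin n → ℕ} {c d : (i : Fin n) → Fin (m i) → C}
    (hcd : ∀ i, Coalgebra.comul (R := R) (x₁ i) = ∑ j, c i j ⊗ₜ[R] d i j) :
    ∑ i, ∑ j, f (c i j) * g (d i j ⊗ₜ[R] x₂ i) = f x := by
  have := congrArg (LinearMap.mul' R A ∘ₗ TensorProduct.map f g)
    (sum_sum_tmul_tmul_eq_sum_tmul_comul hx hcd)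
  simp only [map_sum, LinearMap.comp_apply, TensorProduct.map_tmul, LinearMap.mul'_apply,
    hg, mul_smul_one] at this
  rw [this, ← sum_counit_smul_eq_of_comul_eq (R := R) hx, map_sum]
  simp only [map_smul]

end Sweedler

/-- For any partial representation `π : H → B` of a Hopf algebra and any
Sweedler decompositions `Δ(h) = ∑ᵢ h1 i ⊗ h2 i`, `Δ(h1 i) = ∑ⱼ c i j ⊗ d i j`
(so that `h₍₁₎ ⊗ h₍₂₎ ⊗ h₍₃₎ = ∑ c i j ⊗ d i j ⊗ h2 i`), one has
`π(S(h₍₁₎))π(h₍₂₎)π(S(h₍₃₎)) = π(S(h))` and `π(h₍₁₎)π(S(h₍₂₎))π(h₍₃₎) = π(h)`. -/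
theorem partialRep_key_identities {H : Type} [Ring H] [HopfAlgebra k H]
    {B : Type} [Ring B] [Algebra k B] (π : H →ₗ[k] B) (hπ : IsPartialRep k π) :
    ∀ (h : H) (n : ℕ) (h1 h2 : Fin n → H),
      Coalgebra.comul (R := k) h = ∑ i, h1 i ⊗ₜ[k] h2 i →
      ∀ (m : Fin n → ℕ) (c d : (i : Fin n) → Fin (m i) → H),
        (∀ i, Coalgebra.comul (R := k) (h1 i) = ∑ j, c i j ⊗ₜ[k] d i j) →
        (∑ i, ∑ j, π (HopfAlgebra.antipode (R := k) (c i j)) * π (d i j) *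
            π (HopfAlgebra.antipode (R := k) (h2 i)) = π (HopfAlgebra.antipode (R := k) h)) ∧
        (∑ i, ∑ j, π (c i j) * π (HopfAlgebra.antipode (R := k) (d i j)) * π (h2 i) = π h) := by
  obtain ⟨π_one, -, pr3, -, pr5⟩ := hπ
  intro h n h1 h2 hh m c d hcd
  have map_algebraMap (r : k) : π (algebraMap k H r) = r • 1 := by
    rw [Algebra.algebraMap_eq_smul_one, map_smul, π_one]
  constructor
  · calc _ = ∑ i, ∑ j, π (antipode k (c i j)) * π (d i j * antipode k (h2 i)) := by
          simp only [← Finset.sum_mul]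
          exact Finset.sum_congr rfl fun i _ => pr5 _ _ _ _ _ (hcd i)
      _ = _ := sum_sum_mul_eq_of_map_comul_eq_counit_smul_one (π ∘ₗ antipode k)
          (g := π ∘ₗ LinearMap.mul' k H ∘ₗ (antipode k).lTensor H)
          (fun y => by simp [mul_antipode_lTensor_comul_apply, map_algebraMap]) hh hcd
  · calc _ = ∑ i, ∑ j, π (c i j) * π (antipode k (d i j) * h2 i) := by
          simp only [← Finset.sum_mul]
          exact Finset.sum_congr rfl fun i _ => pr3 _ _ _ _ _ (hcd i)
      _ = _ := sum_sum_mul_eq_of_map_comul_eq_counit_smul_one π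
          (g := π ∘ₗ LinearMap.mul' k H ∘ₗ (antipode k).rTensor H)
          (fun y => by simp [mul_antipode_rTensor_comul_apply, map_algebraMap]) hh hcd
end

section
/- Let π : H → B be a partial representation of a Hopf algebra H on a unital algebra B. If π satisfies π(S(h₍₁₎))π(h₍₂₎) = ε(h)1_B for all h ∈ H, then π is an algebra morphism, i.e. π(h)π(k) = π(hk) for all h,k ∈ H. -/
/-!
Write `Δx = x₍₁₎ ⊗ x₍₂₎`. On one side, the counit axiom, the hypothesis and (PR4) give
`π(hx) = π(h x₍₁₎) ε(x₍₂₎) = π(h x₍₁₎) π(S x₍₂₎) π(x₍₃₎) = π(h x₍₁₎ S(x₍₂₎)) π(x₍₃₎)`,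
with the triple read off `(id ⊗ Δ) Δx`. On the other, the antipode axiom gives
`π(h) π(x) = ε(x₍₁₎) π(h) π(x₍₂₎) = π(h x₍₁₎ S(x₍₂₎)) π(x₍₃₎)`, with the triple read off
`(Δ ⊗ id) Δx`. Coassociativity identifies the two.
-/

open TensorProduct BigOperators HopfAlgebra

variable (k : Type) [CommRing k]

variable {k}

namespace Coalgebra

variable {R A : Type*} [CommSemiring R] [AddCommMonoid A] [Module R A] [Coalgebra R A]

def Repr.ofFin {a : A} {n : ℕ} {u v : Fin n → A} (h : comul (R := R) a = ∑ i, u i ⊗ₜ[R] v i) :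
    Repr R a (Fin n) :=
  ⟨Finset.univ, u, v, h.symm⟩

lemma sum_counit_smul_of_comul_eq {a : A} {n : ℕ} {u v : Fin n → A}
    (h : comul (R := R) a = ∑ i, u i ⊗ₜ[R] v i) : ∑ i, counit (R := R) (u i) • v i = a :=
  sum_counit_smul (Repr.ofFin h)

lemma sum_smul_counit_of_comul_eq {a : A} {n : ℕ} {u v : Fin n → A}
    (h : comul (R := R) a = ∑ i, u i ⊗ₜ[R] v i) : ∑ i, counit (R := R) (v i) • u i = a := by
  have key := congrArg (_root_.TensorProduct.rid R A) (sum_tmul_counit_eq (Repr.ofFin h))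
  simp only [map_sum, _root_.TensorProduct.rid_tmul, one_smul] at key
  exact key

lemma sum_sum_map_tmul_tmul_of_comul_eq {M : Type*} [AddCommMonoid M] [Module R M]
    (Φ : A ⊗[R] (A ⊗[R] A) →ₗ[R] M) {a : A} {n : ℕ} {u v : Fin n → A}
    (h : comul (R := R) a = ∑ i, u i ⊗ₜ[R] v i)
    {p : Fin n → ℕ} {c d : ∀ i, Fin (p i) → A}
    (hu : ∀ i, comul (R := R) (u i) = ∑ j, c i j ⊗ₜ[R] d i j)
    {q : Fin n → ℕ} {e f : ∀ i, Fin (q i) → A}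
    (hv : ∀ i, comul (R := R) (v i) = ∑ j, e i j ⊗ₜ[R] f i j) :
    ∑ i, ∑ j, Φ (c i j ⊗ₜ (d i j ⊗ₜ v i)) = ∑ i, ∑ j, Φ (u i ⊗ₜ (e i j ⊗ₜ f i j)) := by
  have key := congrArg Φ
    (sum_tmul_tmul_eq (Repr.ofFin h) (fun i ↦ Repr.ofFin (hu i)) (fun i ↦ Repr.ofFin (hv i)))
  simp only [map_sum] at key
  exact key

end Coalgebra

section

variable {H B : Type} [Ring H] [HopfAlgebra k H] [Ring B] [Algebra k B] (π : H →ₗ[k] B)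

noncomputable def mulAntipodeMul (h : H) : H ⊗[k] (H ⊗[k] H) →ₗ[k] B :=
  LinearMap.mul' k B ∘ₗ
    TensorProduct.map
      (π ∘ₗ LinearMap.mulLeft k h ∘ₗ LinearMap.mul' k H ∘ₗ (antipode k).lTensor H) π ∘ₗ
    (TensorProduct.assoc k H H H).symm

lemma mulAntipodeMul_tmul (h p q r : H) :
    mulAntipodeMul π h (p ⊗ₜ[k] (q ⊗ₜ[k] r)) = π (h * (p * antipode k q)) * π r := by
  simp [mulAntipodeMul]

lemma map_mul_map_eq_sum_sum_mul_antipode (h : H) {x : H} {n : ℕ} {u v : Fin n → H}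
    (hx : Coalgebra.comul (R := k) x = ∑ i, u i ⊗ₜ[k] v i)
    {p : Fin n → ℕ} {c d : ∀ i, Fin (p i) → H}
    (hu : ∀ i, Coalgebra.comul (R := k) (u i) = ∑ j, c i j ⊗ₜ[k] d i j) :
    π h * π x = ∑ i, ∑ j, π (h * (c i j * antipode k (d i j))) * π (v i) := by
  have hcounit (i : Fin n) : ∑ j, c i j * antipode k (d i j) =
      Coalgebra.counit (R := k) (u i) • 1 :=
    sum_mul_antipode_eq_smul (Coalgebra.Repr.ofFin (hu i))
  calc π h * π x = π h * π (∑ i, Coalgebra.counit (R := k) (u i) • v i) := by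
        rw [Coalgebra.sum_counit_smul_of_comul_eq hx]
    _ = ∑ i, π (h * ∑ j, c i j * antipode k (d i j)) * π (v i) := by
        simp only [hcounit, mul_smul_comm, mul_one, map_sum, map_smul, Finset.mul_sum,
          smul_mul_assoc]
    _ = ∑ i, ∑ j, π (h * (c i j * antipode k (d i j))) * π (v i) := by
        simp only [Finset.mul_sum, map_sum, Finset.sum_mul]

lemma IsPartialRep.map_mul_eq_sum_sum_antipode_mul (hπ : IsPartialRep k π)
    (hcond : ∀ (h : H) (n : ℕ) (h1 h2 : Fin n → H),
      Coalgebra.comul (R := k) h = ∑ i, h1 i ⊗ₜ[k] h2 i →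
      ∑ i, π (antipode k (h1 i)) * π (h2 i) = algebraMap k B (Coalgebra.counit (R := k) h))
    (h : H) {x : H} {n : ℕ} {u v : Fin n → H}
    (hx : Coalgebra.comul (R := k) x = ∑ i, u i ⊗ₜ[k] v i)
    {q : Fin n → ℕ} {e f : ∀ i, Fin (q i) → H}
    (hv : ∀ i, Coalgebra.comul (R := k) (v i) = ∑ j, e i j ⊗ₜ[k] f i j) :
    π (h * x) = ∑ i, ∑ j, π (h * (u i * antipode k (e i j))) * π (f i j) := by
  obtain ⟨-, -, -, hPR4, -⟩ := hπ
  calc π (h * x) = π (h * ∑ i, Coalgebra.counit (R := k) (v i) • u i) := by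
        rw [Coalgebra.sum_smul_counit_of_comul_eq hx]
    _ = ∑ i, π (h * u i) * algebraMap k B (Coalgebra.counit (R := k) (v i)) := by
        simp only [Algebra.algebraMap_eq_smul_one, mul_smul_comm, mul_one, map_sum, map_smul,
          Finset.mul_sum]
    _ = ∑ i, π (h * u i) * ∑ j, π (antipode k (e i j)) * π (f i j) := by
        simp only [hcond _ _ _ _ (hv _)]
    _ = ∑ i, ∑ j, π (h * (u i * antipode k (e i j))) * π (f i j) := by
        simp only [hPR4 _ _ _ _ _ (hv _), mul_assoc]

end

/-- If a partial representation `π : H → B` satisfies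
`π(S(h₍₁₎))π(h₍₂₎) = ε(h)·1` for all `h`, then `π` is multiplicative, i.e. an algebra
morphism. -/
theorem partialRep_is_algebra_morphism_of_antipode_counit {H : Type} [Ring H]
    [HopfAlgebra k H] {B : Type} [Ring B] [Algebra k B]
    (π : H →ₗ[k] B) (hπ : IsPartialRep k π)
    (hcond : ∀ (h : H) (n : ℕ) (h1 h2 : Fin n → H),
      Coalgebra.comul (R := k) h = ∑ i, h1 i ⊗ₜ[k] h2 i →
      ∑ i, π (HopfAlgebra.antipode (R := k) (h1 i)) * π (h2 i) =
        algebraMap k B (Coalgebra.counit (R := k) h)) :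
    ∀ h x : H, π h * π x = π (h * x) := by
  intro h x
  obtain ⟨n, u, v, hx⟩ := exists_sum_tmul_eq (Coalgebra.comul (R := k) x)
  choose p c d hu using fun i ↦ exists_sum_tmul_eq (Coalgebra.comul (R := k) (u i))
  choose q e f hv using fun i ↦ exists_sum_tmul_eq (Coalgebra.comul (R := k) (v i))
  calc π h * π x = ∑ i, ∑ j, π (h * (c i j * antipode k (d i j))) * π (v i) :=
        map_mul_map_eq_sum_sum_mul_antipode π h hx hu
    _ = ∑ i, ∑ j, π (h * (u i * antipode k (e i j))) * π (f i j) := by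
        simpa only [mulAntipodeMul_tmul] using
          Coalgebra.sum_sum_map_tmul_tmul_of_comul_eq (mulAntipodeMul π h) hx hu hv
    _ = π (h * x) := (hπ.map_mul_eq_sum_sum_antipode_mul π hcond h hx hv).symm
end

section
/- Let A be a symmetric partial left H-module algebra over a Hopf algebra H. Then the map π : H → End_k(A) defined by π(h)(a) = h·a is a partial representation of H on End_k(A). -/
open TensorProduct BigOperators HopfAlgebra

variable (k : Type) [CommRing k]

/-- A symmetric partial action of a Hopf algebra `H` on an algebra `A` (axioms (PA1)-(PA4)),
stated via arbitrary finite Sweedler decompositions. -/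
def IsSymmetricPartialAction {k : Type} [CommRing k] {H : Type} [Ring H] [HopfAlgebra k H]
    {A : Type} [Ring A] [Algebra k A] (act : H →ₗ[k] Module.End k A) : Prop :=
  -- (PA1)
  (∀ a : A, act 1 a = a) ∧
  -- (PA2) : h·(ab) = (h₍₁₎·a)(h₍₂₎·b)
  (∀ (h : H) (a b : A) (n : ℕ) (h1 h2 : Fin n → H),
    Coalgebra.comul (R := k) h = ∑ i, h1 i ⊗ₜ[k] h2 i →
    act h (a * b) = ∑ i, act (h1 i) a * act (h2 i) b) ∧
  -- (PA3) : h·(x·a) = (h₍₁₎·1)(h₍₂₎x·a)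
  (∀ (h x : H) (a : A) (n : ℕ) (h1 h2 : Fin n → H),
    Coalgebra.comul (R := k) h = ∑ i, h1 i ⊗ₜ[k] h2 i →
    act h (act x a) = ∑ i, act (h1 i) 1 * act (h2 i * x) a) ∧
  -- (PA4) : h·(x·a) = (h₍₁₎x·a)(h₍₂₎·1)
  (∀ (h x : H) (a : A) (n : ℕ) (h1 h2 : Fin n → H),
    Coalgebra.comul (R := k) h = ∑ i, h1 i ⊗ₜ[k] h2 i →
    act h (act x a) = ∑ i, act (h1 i * x) a * act (h2 i) 1)

variable {k}

/-!
Write `ρ a : H → A` for `h ↦ h·a` and work in the convolution algebra of linear maps `H → A`.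
Axiom (PA2) says that `a ↦ ρ a` is multiplicative, and (PA3), (PA4) say
`ρ (w·a) = ρ 1 * ρ a (- w) = ρ a (- w) * ρ 1`; associativity of convolution then gives
`h·((x·1) a) = (h₁x·1)(h₂·a)` and `h·(a (x·1)) = (h₁·a)(h₂x·1)`.

The remaining sums are collapsed by the Hopf identities `Δ(x₁)(1 ⊗ S x₂) = x ⊗ 1` and
`Δ(S x₁)(x₂ ⊗ 1) = 1 ⊗ S x`. These hold because, in the convolution algebra of linear maps
`H → H ⊗ H`, one has `Δ = ι₁ * ι₂` for the two inclusions, and `f ∘ S` is a two-sided convolution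
inverse of every algebra map `f`, in particular of `ι₁`, `ι₂` and `Δ`.

Both sides of (PR2) evaluated at `a` equal `(h₁x·1)(h₂·a)`, of (PR3) `(h·1)(x·a)`,
of (PR4) `(h₁·a)(h₂S(x)·1)` and of (PR5) `(x·a)(S(h)·1)`.
-/

open Coalgebra WithConv LinearMap Algebra.TensorProduct

theorem convMul_apply_of_comul_eq_sum {C B ι : Type*} [AddCommMonoid C] [Module k C]
    [CoalgebraStruct k C] [Semiring B] [Algebra k B] [Fintype ι] (f g : WithConv (C →ₗ[k] B))
    {x : C} {x₁ x₂ : ι → C} (hx : comul (R := k) x = ∑ i, x₁ i ⊗ₜ x₂ i) :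
    (f * g) x = ∑ i, f (x₁ i) * g (x₂ i) :=
  (⟨Finset.univ, x₁, x₂, hx.symm⟩ : Repr k x ι).convMul_apply f g

section ConvolutionInverse

variable {H B : Type*} [Semiring H] [HopfAlgebra k H] [Semiring B] [Algebra k B]

theorem AlgHom.comp_antipode_mul_self (f : H →ₐ[k] B) :
    toConv (f.toLinearMap ∘ₗ antipode k) * toConv f.toLinearMap = 1 := by
  have := algHom_comp_convMul_distrib f (toConv (antipode k)) (toConv LinearMap.id)
  rw [antipode_mul_id] at this
  ext x
  simpa using (congr($this x)).symm

theorem AlgHom.self_mul_comp_antipode (f : H →ₐ[k] B) :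
    toConv f.toLinearMap * toConv (f.toLinearMap ∘ₗ antipode k) = 1 := by
  have := algHom_comp_convMul_distrib f (toConv LinearMap.id) (toConv (antipode k))
  rw [id_mul_antipode] at this
  ext x
  simpa using (congr($this x)).symm

end ConvolutionInverse

section Comultiplication

variable {H : Type*} [Semiring H] [HopfAlgebra k H]

theorem toConv_comul_eq_includeLeft_mul_includeRight :
    toConv (comul : H →ₗ[k] H ⊗[k] H) =
      toConv (includeLeft : H →ₐ[k] H ⊗[k] H).toLinearMap * toConv includeRight.toLinearMap := by
  have : mul' k (H ⊗[k] H) ∘ₗ map (includeLeft : H →ₐ[k] H ⊗[k] H).toLinearMap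
      includeRight.toLinearMap = LinearMap.id :=
    TensorProduct.ext' fun a b => by simp
  ext x
  simpa using congr($this.symm (comul x))

theorem comul_mul_includeRight_comp_antipode :
    toConv (comul : H →ₗ[k] H ⊗[k] H) * toConv (includeRight.toLinearMap ∘ₗ antipode k) =
      toConv (includeLeft : H →ₐ[k] H ⊗[k] H).toLinearMap := by
  rw [toConv_comul_eq_includeLeft_mul_includeRight, mul_assoc,
    AlgHom.self_mul_comp_antipode, mul_one]

theorem comul_comp_antipode_mul_includeLeft :
    toConv (comul ∘ₗ antipode k : H →ₗ[k] H ⊗[k] H) *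
        toConv (includeLeft : H →ₐ[k] H ⊗[k] H).toLinearMap =
      toConv (includeRight.toLinearMap ∘ₗ antipode k) := by
  have hinv : toConv (comul ∘ₗ antipode k) * toConv comul =
      (1 : WithConv (H →ₗ[k] H ⊗[k] H)) :=
    (Bialgebra.comulAlgHom k H).comp_antipode_mul_self
  rw [← comul_mul_includeRight_comp_antipode, ← mul_assoc, hinv, one_mul]

theorem sum_comul_mul_one_tmul_antipode {ι : Type*} [Fintype ι] {x : H} {x₁ x₂ : ι → H}
    (hx : comul (R := k) x = ∑ i, x₁ i ⊗ₜ x₂ i) :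
    ∑ i, comul (R := k) (x₁ i) * (1 ⊗ₜ antipode k (x₂ i)) = x ⊗ₜ 1 := by
  simpa [convMul_apply_of_comul_eq_sum _ _ hx] using
    congr($(comul_mul_includeRight_comp_antipode (k := k) (H := H)) x)

theorem sum_comul_antipode_mul_tmul_one {ι : Type*} [Fintype ι] {x : H} {x₁ x₂ : ι → H}
    (hx : comul (R := k) x = ∑ i, x₁ i ⊗ₜ x₂ i) :
    ∑ i, comul (R := k) (antipode k (x₁ i)) * (x₂ i ⊗ₜ 1) = 1 ⊗ₜ antipode k x := by
  simpa [convMul_apply_of_comul_eq_sum _ _ hx] using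
    congr($(comul_comp_antipode_mul_includeLeft (k := k) (H := H)) x)

end Comultiplication

theorem TensorProduct.map_comp_mulRight_apply {H M N : Type*} [Semiring H] [Algebra k H]
    [AddCommMonoid M] [Module k M] [AddCommMonoid N] [Module k N]
    (f : H →ₗ[k] M) (g : H →ₗ[k] N) (w w' : H) (t : H ⊗[k] H) :
    map (f ∘ₗ mulRight k w) (g ∘ₗ mulRight k w') t = map f g (t * (w ⊗ₜ w')) := by
  induction t using TensorProduct.induction_on with
  | zero => simp
  | tmul => simp
  | add _ _ h₁ h₂ => simp [add_mul, h₁, h₂]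

namespace IsSymmetricPartialAction

variable {H A : Type} [Ring H] [HopfAlgebra k H] [Ring A] [Algebra k A]
  {act : H →ₗ[k] Module.End k A}

theorem toConv_flip_mul (hact : IsSymmetricPartialAction act) (a b : A) :
    toConv (act.flip (a * b)) = toConv (act.flip a) * toConv (act.flip b) := by
  ext h
  obtain ⟨n, h₁, h₂, hh⟩ := TensorProduct.exists_sum_tmul_eq (comul (R := k) h)
  rw [convMul_apply_of_comul_eq_sum _ _ hh]
  exact hact.2.1 h a b n h₁ h₂ hh

theorem toConv_flip_act_eq_flip_one_mul (hact : IsSymmetricPartialAction act) (w : H) (a : A) :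
    toConv (act.flip (act w a)) = toConv (act.flip 1) * toConv (act.flip a ∘ₗ mulRight k w) := by
  ext h
  obtain ⟨n, h₁, h₂, hh⟩ := TensorProduct.exists_sum_tmul_eq (comul (R := k) h)
  rw [convMul_apply_of_comul_eq_sum _ _ hh]
  exact hact.2.2.1 h w a n h₁ h₂ hh

theorem toConv_flip_act_eq_mul_flip_one (hact : IsSymmetricPartialAction act) (w : H) (a : A) :
    toConv (act.flip (act w a)) = toConv (act.flip a ∘ₗ mulRight k w) * toConv (act.flip 1) := by
  ext h
  obtain ⟨n, h₁, h₂, hh⟩ := TensorProduct.exists_sum_tmul_eq (comul (R := k) h)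
  rw [convMul_apply_of_comul_eq_sum _ _ hh]
  exact hact.2.2.2 h w a n h₁ h₂ hh

theorem toConv_flip_act_one_mul (hact : IsSymmetricPartialAction act) (x : H) (a : A) :
    toConv (act.flip (act x 1 * a)) =
      toConv (act.flip 1 ∘ₗ mulRight k x) * toConv (act.flip a) := by
  rw [hact.toConv_flip_mul, hact.toConv_flip_act_eq_mul_flip_one, mul_assoc,
    ← hact.toConv_flip_mul, one_mul]

theorem toConv_flip_mul_act_one (hact : IsSymmetricPartialAction act) (x : H) (a : A) :
    toConv (act.flip (a * act x 1)) =
      toConv (act.flip a) * toConv (act.flip 1 ∘ₗ mulRight k x) := by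
  rw [hact.toConv_flip_mul, hact.toConv_flip_act_eq_flip_one_mul, ← mul_assoc,
    ← hact.toConv_flip_mul, mul_one]

theorem sum_act_mul_act_antipode_mul (hact : IsSymmetricPartialAction act) (u y : H) (a : A)
    {ι : Type*} [Fintype ι] {x : H} {x₁ x₂ : ι → H}
    (hx : comul (R := k) x = ∑ i, x₁ i ⊗ₜ x₂ i) :
    ∑ i, act (u * x₁ i) (act (antipode k (x₂ i) * y) a) =
      (toConv (act.flip 1 ∘ₗ mulRight k x) * toConv (act.flip a ∘ₗ mulRight k y)) u := by
  have pa3 (h w : H) :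
      act h (act w a) = mul' k A (map (act.flip 1) (act.flip a) (comul h * (1 ⊗ₜ w))) := by
    simpa [← map_comp_mulRight_apply] using
      congr($(hact.toConv_flip_act_eq_flip_one_mul w a) h)
  calc ∑ i, act (u * x₁ i) (act (antipode k (x₂ i) * y) a)
      = ∑ i, mul' k A (map (act.flip 1) (act.flip a)
          (comul u * (comul (x₁ i) * (1 ⊗ₜ antipode k (x₂ i))) * (1 ⊗ₜ y))) := by
        simp_rw [pa3, Bialgebra.comul_mul, mul_assoc, Algebra.TensorProduct.tmul_mul_tmul, one_mul]
    _ = mul' k A (map (act.flip 1) (act.flip a) (comul u * (x ⊗ₜ 1) * (1 ⊗ₜ y))) := by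
        rw [← map_sum, ← map_sum, ← Finset.sum_mul, ← Finset.mul_sum,
          sum_comul_mul_one_tmul_antipode hx]
    _ = _ := by
        simp [mul_assoc, map_comp_mulRight_apply]

theorem sum_act_mul_antipode_act_mul (hact : IsSymmetricPartialAction act) (u y : H) (a : A)
    {ι : Type*} [Fintype ι] {x : H} {x₁ x₂ : ι → H}
    (hx : comul (R := k) x = ∑ i, x₁ i ⊗ₜ x₂ i) :
    ∑ i, act (u * antipode k (x₁ i)) (act (x₂ i * y) a) =
      (toConv (act.flip a ∘ₗ mulRight k y) *
        toConv (act.flip 1 ∘ₗ mulRight k (antipode k x))) u := by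
  have pa4 (h w : H) :
      act h (act w a) = mul' k A (map (act.flip a) (act.flip 1) (comul h * (w ⊗ₜ 1))) := by
    simpa [← map_comp_mulRight_apply] using
      congr($(hact.toConv_flip_act_eq_mul_flip_one w a) h)
  calc ∑ i, act (u * antipode k (x₁ i)) (act (x₂ i * y) a)
      = ∑ i, mul' k A (map (act.flip a) (act.flip 1)
          (comul u * (comul (antipode k (x₁ i)) * (x₂ i ⊗ₜ 1)) * (y ⊗ₜ 1))) := by
        simp_rw [pa4, Bialgebra.comul_mul, mul_assoc, Algebra.TensorProduct.tmul_mul_tmul, one_mul]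
    _ = mul' k A (map (act.flip a) (act.flip 1) (comul u * (1 ⊗ₜ antipode k x) * (y ⊗ₜ 1))) := by
        rw [← map_sum, ← map_sum, ← Finset.sum_mul, ← Finset.mul_sum,
          sum_comul_antipode_mul_tmul_one hx]
    _ = _ := by
        simp [mul_assoc, map_comp_mulRight_apply]

theorem sum_act_act_antipode_mul (hact : IsSymmetricPartialAction act) (y : H) (a : A)
    {ι : Type*} [Fintype ι] {x : H} {x₁ x₂ : ι → H}
    (hx : comul (R := k) x = ∑ i, x₁ i ⊗ₜ x₂ i) :
    ∑ i, act (x₁ i) (act (antipode k (x₂ i) * y) a) = act x 1 * act y a := by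
  simpa [Algebra.TensorProduct.one_def] using hact.sum_act_mul_act_antipode_mul 1 y a hx

theorem sum_act_antipode_act_mul (hact : IsSymmetricPartialAction act) (y : H) (a : A)
    {ι : Type*} [Fintype ι] {x : H} {x₁ x₂ : ι → H}
    (hx : comul (R := k) x = ∑ i, x₁ i ⊗ₜ x₂ i) :
    ∑ i, act (antipode k (x₁ i)) (act (x₂ i * y) a) = act y a * act (antipode k x) 1 := by
  simpa [Algebra.TensorProduct.one_def] using hact.sum_act_mul_antipode_act_mul 1 y a hx

theorem act_mul_sum_act_mul_act_antipode (hact : IsSymmetricPartialAction act) (h : H)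
    {ι : Type*} [Fintype ι] {x : H} {x₁ x₂ : ι → H}
    (hx : comul (R := k) x = ∑ i, x₁ i ⊗ₜ x₂ i) :
    act h * ∑ i, act (x₁ i) * act (antipode k (x₂ i)) =
      ∑ i, act (h * x₁ i) * act (antipode k (x₂ i)) := by
  ext a
  have hl := hact.sum_act_act_antipode_mul 1 a hx
  have hr := hact.sum_act_mul_act_antipode_mul h 1 a hx
  have hc := congr($(hact.toConv_flip_act_one_mul x a) h)
  simp only [mul_one, hact.1, mulRight_one, comp_id] at hl hr
  simp only [Module.End.mul_apply, LinearMap.sum_apply, hl, hr]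
  exact hc

theorem sum_act_mul_act_antipode_mul_act (hact : IsSymmetricPartialAction act) (x : H)
    {ι : Type*} [Fintype ι] {h : H} {h₁ h₂ : ι → H}
    (hh : comul (R := k) h = ∑ i, h₁ i ⊗ₜ h₂ i) :
    (∑ i, act (h₁ i) * act (antipode k (h₂ i))) * act x =
      ∑ i, act (h₁ i) * act (antipode k (h₂ i) * x) := by
  ext a
  have hl := hact.sum_act_act_antipode_mul 1 (act x a) hh
  simp only [mul_one, hact.1] at hl
  simp [Module.End.mul_apply, LinearMap.sum_apply, hl, hact.sum_act_act_antipode_mul x a hh]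

theorem act_mul_sum_act_antipode_mul_act (hact : IsSymmetricPartialAction act) (h : H)
    {ι : Type*} [Fintype ι] {x : H} {x₁ x₂ : ι → H}
    (hx : comul (R := k) x = ∑ i, x₁ i ⊗ₜ x₂ i) :
    act h * ∑ i, act (antipode k (x₁ i)) * act (x₂ i) =
      ∑ i, act (h * antipode k (x₁ i)) * act (x₂ i) := by
  ext a
  have hl := hact.sum_act_antipode_act_mul 1 a hx
  have hr := hact.sum_act_mul_antipode_act_mul h 1 a hx
  have hd := congr($(hact.toConv_flip_mul_act_one (antipode k x) a) h)
  simp only [mul_one, hact.1, mulRight_one, comp_id] at hl hr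
  simp only [Module.End.mul_apply, LinearMap.sum_apply, hl, hr]
  exact hd

theorem sum_act_antipode_mul_act_mul_act (hact : IsSymmetricPartialAction act) (x : H)
    {ι : Type*} [Fintype ι] {h : H} {h₁ h₂ : ι → H}
    (hh : comul (R := k) h = ∑ i, h₁ i ⊗ₜ h₂ i) :
    (∑ i, act (antipode k (h₁ i)) * act (h₂ i)) * act x =
      ∑ i, act (antipode k (h₁ i)) * act (h₂ i * x) := by
  ext a
  have hl := hact.sum_act_antipode_act_mul 1 (act x a) hh
  simp only [mul_one, hact.1] at hl
  simp [Module.End.mul_apply, LinearMap.sum_apply, hl, hact.sum_act_antipode_act_mul x a hh]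

end IsSymmetricPartialAction

/-- If `A` is a symmetric partial left `H`-module algebra, then
`π : H → End_k(A)`, `π(h)(a) = h·a`, is a partial representation of `H` on `End_k(A)`. -/
theorem partialAction_gives_partialRep {k : Type} [Field k] {H : Type} [Ring H]
    [HopfAlgebra k H] {A : Type} [Ring A] [Algebra k A]
    (act : H →ₗ[k] Module.End k A) (hact : IsSymmetricPartialAction act) :
    IsPartialRep k act :=
  ⟨LinearMap.ext hact.1,
    fun h _ _ _ _ hx => hact.act_mul_sum_act_mul_act_antipode h hx,
    fun _ x _ _ _ hh => hact.sum_act_mul_act_antipode_mul_act x hh,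
    fun h _ _ _ _ hx => hact.act_mul_sum_act_antipode_mul_act h hx,
    fun _ x _ _ _ hh => hact.sum_act_antipode_mul_act_mul_act x hh⟩
end

section
/- Let G be a group and k a field. The structures of a partial kG-module on the one-dimensional vector space k are in one-to-one correspondence with pairs (H, λ), where H ≤ G is a subgroup and λ : H → k* is a group homomorphism (one-dimensional representation of H). -/
/-!
On a simple module every domain `X g` is either `0` or everything. The `g` with `X g = M` form a
subgroup `H`: closure under products comes from `θ_image`, closure under inverses from
`θ g : X g⁻¹ ≃ X g`. On `H` the maps `θ g` are automorphisms of `M` composing by `θ_comp`, so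
they form a representation of `H`. Conversely, a representation of a subgroup `H` is a partial
action with `X g = M` on `H` and `X g = 0` off `H`, and the two constructions are mutually inverse.
For `M = k` the automorphism group is `kˣ`.
-/

/-- A partial action of a group `G` on a `k`-vector space `M` by partially defined
`k`-linear isomorphisms (equivalently, a partial `kG`-module structure on `M`):
subspaces `X g ⊆ M` and isomorphisms `θ g : X g⁻¹ ≃ X g` with `X 1 = M`, `θ 1 = id`,
`θ g (X g⁻¹ ∩ X h) = X g ∩ X (gh)` and `θ g ∘ θ h = θ (gh)` where defined. -/
structure PartialGModule (G : Type*) [Group G] (k : Type*) [Field k]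
    (M : Type*) [AddCommGroup M] [Module k M] where
  X : G → Submodule k M
  θ : (g : G) → (X g⁻¹ ≃ₗ[k] X g)
  X_one : X 1 = ⊤
  θ_one : ∀ m : X (1 : G)⁻¹, ((θ 1 m : M)) = (m : M)
  θ_image : ∀ g h : G,
    Submodule.map ((X g).subtype ∘ₗ (θ g : X g⁻¹ →ₗ[k] X g))
      (Submodule.comap (X g⁻¹).subtype (X h)) =
      X g ⊓ X (g * h)
  θ_comp : ∀ (g h : G) (m : X h⁻¹) (h₁ : ((θ h m : M)) ∈ X g⁻¹)
    (h₂ : (m : M) ∈ X (g * h)⁻¹),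
    ((θ g ⟨(θ h m : M), h₁⟩ : M)) = ((θ (g * h) ⟨(m : M), h₂⟩ : M))

noncomputable section

def LinearEquiv.selfMulEquivUnits (R : Type*) [CommSemiring R] : (R ≃ₗ[R] R) ≃* Rˣ :=
  (LinearMap.GeneralLinearGroup.generalLinearEquiv R R).symm.trans
    (Units.mapEquiv ((AlgEquiv.toOpposite R R).trans (AlgEquiv.moduleEndSelf R)).symm.toMulEquiv)

theorem Subgroup.sigma_monoidHom_ext {G N : Type*} [Group G] [Monoid N] {H₁ H₂ : Subgroup G}
    {f₁ : H₁ →* N} {f₂ : H₂ →* N} (hH : H₁ = H₂)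
    (hf : ∀ (g : G) (h₁ : g ∈ H₁) (h₂ : g ∈ H₂), f₁ ⟨g, h₁⟩ = f₂ ⟨g, h₂⟩) :
    (⟨H₁, f₁⟩ : Σ H : Subgroup G, H →* N) = ⟨H₂, f₂⟩ := by
  subst hH
  exact congrArg _ (MonoidHom.ext fun g => hf g g.2 g.2)

namespace PartialGModule

variable {G : Type*} [Group G] {k : Type*} [Field k] {M : Type*} [AddCommGroup M] [Module k M]

theorem ext {P Q : PartialGModule G k M} (hX : P.X = Q.X)
    (hθ : ∀ (g : G) (m : M) (hP : m ∈ P.X g⁻¹) (hQ : m ∈ Q.X g⁻¹),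
      (P.θ g ⟨m, hP⟩ : M) = Q.θ g ⟨m, hQ⟩) : P = Q := by
  obtain ⟨X, θ, _, _, _, _⟩ := P
  obtain ⟨X', θ', _, _, _, _⟩ := Q
  obtain rfl : X = X' := hX
  obtain rfl : θ = θ' := funext fun g => LinearEquiv.ext fun m => Subtype.ext (hθ g m m.2 m.2)
  rfl

theorem X_le_X_mul (P : PartialGModule G k M) (a : G) {b : G} (hb : P.X b = ⊤) :
    P.X a ≤ P.X (a * b) := by
  have h := P.θ_image a b
  rw [hb, Submodule.comap_top, Submodule.map_top, LinearMap.range_comp, LinearEquiv.range,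
    Submodule.map_top, Submodule.range_subtype] at h
  exact h ▸ inf_le_right

section Simple

variable [IsSimpleModule k M] (P : PartialGModule G k M)

theorem X_inv_eq_top {g : G} (hg : P.X g = ⊤) : P.X g⁻¹ = ⊤ := by
  refine (IsSimpleOrder.eq_bot_or_eq_top _).resolve_left fun hbot =>
    IsSimpleOrder.bot_ne_top (α := Submodule k M) ?_
  rw [← hg, eq_comm, ← Submodule.subsingleton_iff_eq_bot, ← (P.θ g).toEquiv.subsingleton_congr,
    Submodule.subsingleton_iff_eq_bot, hbot]

def globalSubgroup : Subgroup G where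
  carrier := {g | P.X g = ⊤}
  one_mem' := P.X_one
  inv_mem' := P.X_inv_eq_top
  mul_mem' {a} _ ha hb := top_le_iff.mp (ha ▸ P.X_le_X_mul a hb)

def globalRep : P.globalSubgroup →* (M ≃ₗ[k] M) where
  toFun g := (LinearEquiv.ofTop _ (P.X_inv_eq_top g.2)).symm ≪≫ₗ P.θ g ≪≫ₗ
    LinearEquiv.ofTop _ g.2
  map_one' := LinearEquiv.ext fun m => P.θ_one _
  map_mul' a b := by
    ext m
    change (P.θ (a * b) ⟨m, _⟩ : M) = P.θ a ⟨P.θ b ⟨m, _⟩, _⟩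
    exact (P.θ_comp a b ⟨m, P.X_inv_eq_top b.2 ▸ Submodule.mem_top⟩ _ _).symm

theorem globalRep_apply (g : P.globalSubgroup) (m : M) (hm : m ∈ P.X (g : G)⁻¹) :
    P.globalRep g m = P.θ g ⟨m, hm⟩ :=
  rfl

end Simple

section OfRep

variable {H : Subgroup G} (ρ : H →* (M ≃ₗ[k] M))

-- The value off `H` is irrelevant: there the domains `ofRepDomain` are `0`.
open scoped Classical in
def extendByOne (g : G) : M ≃ₗ[k] M := if hg : g ∈ H then ρ ⟨g, hg⟩ else 1

theorem extendByOne_of_mem {g : G} (hg : g ∈ H) : extendByOne ρ g = ρ ⟨g, hg⟩ :=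
  dif_pos hg

variable (k M H) in
open scoped Classical in
def ofRepDomain (g : G) : Submodule k M := if g ∈ H then ⊤ else ⊥

theorem mem_ofRepDomain {g : G} {m : M} : m ∈ ofRepDomain k M H g ↔ g ∈ H ∨ m = 0 := by
  unfold ofRepDomain
  split_ifs with hg <;> simp [hg]

theorem ofRepDomain_inv (g : G) : ofRepDomain k M H g⁻¹ = ofRepDomain k M H g := by
  by_cases hg : g ∈ H <;> simp [ofRepDomain, hg]

theorem map_ofRepDomain (e : M ≃ₗ[k] M) (g : G) :
    (ofRepDomain k M H g).map (e : M →ₗ[k] M) = ofRepDomain k M H g := by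
  unfold ofRepDomain
  split_ifs
  · rw [Submodule.map_top, LinearEquiv.range]
  · exact Submodule.map_bot _

def ofRepθ (g : G) : ofRepDomain k M H g⁻¹ ≃ₗ[k] ofRepDomain k M H g :=
  (extendByOne ρ g).ofSubmodules _ _ (by rw [ofRepDomain_inv, map_ofRepDomain])

theorem ofRepθ_apply (g : G) (m : ofRepDomain k M H g⁻¹) :
    (ofRepθ ρ g m : M) = extendByOne ρ g m :=
  rfl

theorem ofRepθ_image (g h : G) :
    Submodule.map ((ofRepDomain k M H g).subtype ∘ₗ (ofRepθ ρ g : _ →ₗ[k] _))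
      (Submodule.comap (ofRepDomain k M H g⁻¹).subtype (ofRepDomain k M H h)) =
      ofRepDomain k M H g ⊓ ofRepDomain k M H (g * h) := by
  ext x
  simp only [Submodule.mem_map, Submodule.mem_comap, Submodule.mem_inf, LinearMap.comp_apply,
    Submodule.subtype_apply, LinearEquiv.coe_coe, ofRepθ_apply, Subtype.exists, mem_ofRepDomain,
    inv_mem_iff]
  constructor
  · rintro ⟨y, hgy, hhy, rfl⟩
    rcases eq_or_ne y 0 with rfl | hy0
    · simp only [map_zero, or_true, and_self]
    · have hg := hgy.resolve_right hy0
      exact ⟨Or.inl hg, Or.inl (mul_mem hg (hhy.resolve_right hy0))⟩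
  · rintro ⟨hgx, hghx⟩
    rcases eq_or_ne x 0 with rfl | hx0
    · exact ⟨0, Or.inr rfl, Or.inr rfl, map_zero _⟩
    · have hg := hgx.resolve_right hx0
      have hh := (H.mul_mem_cancel_left hg).mp (hghx.resolve_right hx0)
      exact ⟨(extendByOne ρ g).symm x, Or.inl hg, Or.inl hh, LinearEquiv.apply_symm_apply _ _⟩

theorem extendByOne_mul_apply {g h : G} {m : M} (hm : m ∈ ofRepDomain k M H h⁻¹)
    (hhm : extendByOne ρ h m ∈ ofRepDomain k M H g⁻¹) :
    extendByOne ρ g (extendByOne ρ h m) = extendByOne ρ (g * h) m := by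
  rw [ofRepDomain_inv, mem_ofRepDomain] at hm hhm
  rcases hm with hh | rfl
  · rcases hhm with hg | hhm0
    · rw [extendByOne_of_mem ρ hg, extendByOne_of_mem ρ hh, extendByOne_of_mem ρ (mul_mem hg hh),
        ← MulMemClass.mk_mul_mk, map_mul, LinearEquiv.mul_apply]
    · rw [hhm0, (extendByOne ρ h).map_eq_zero_iff.mp hhm0, map_zero, map_zero]
  · simp only [map_zero]

def ofRep : PartialGModule G k M where
  X := ofRepDomain k M H
  θ := ofRepθ ρ
  X_one := if_pos H.one_mem
  θ_one m := by
    rw [ofRepθ_apply, extendByOne_of_mem ρ H.one_mem]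
    exact DFunLike.congr_fun (map_one ρ) (m : M)
  θ_image := ofRepθ_image ρ
  θ_comp _ _ m h₁ _ := extendByOne_mul_apply ρ m.2 h₁

end OfRep

section Correspondence

variable [IsSimpleModule k M]

theorem ofRep_globalRep (P : PartialGModule G k M) : ofRep P.globalRep = P := by
  have hX : ofRepDomain k M P.globalSubgroup = P.X := funext fun g => by
    unfold ofRepDomain
    split_ifs with hg
    · exact hg.symm
    · exact ((IsSimpleOrder.eq_bot_or_eq_top _).resolve_right hg).symm
  refine ext hX fun g m hm hPm => ?_
  change m ∈ ofRepDomain k M _ g⁻¹ at hm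
  change extendByOne P.globalRep g m = P.θ g ⟨m, hPm⟩
  by_cases hg : g ∈ P.globalSubgroup
  · rw [extendByOne_of_mem _ hg, globalRep_apply]
  · rw [ofRepDomain_inv, mem_ofRepDomain] at hm
    obtain rfl : m = 0 := hm.resolve_left hg
    rw [map_zero]
    exact congrArg Subtype.val (P.θ g).map_zero.symm

theorem globalSubgroup_ofRep {H : Subgroup G} (ρ : H →* (M ≃ₗ[k] M)) :
    (ofRep ρ).globalSubgroup = H := by
  ext g
  change ofRepDomain k M H g = ⊤ ↔ g ∈ H
  unfold ofRepDomain
  split_ifs with hg <;> simp [hg]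

def equivSigmaRep : PartialGModule G k M ≃ Σ H : Subgroup G, H →* (M ≃ₗ[k] M) where
  toFun P := ⟨P.globalSubgroup, P.globalRep⟩
  invFun s := ofRep s.2
  left_inv := ofRep_globalRep
  right_inv := fun ⟨H, ρ⟩ => Subgroup.sigma_monoidHom_ext (globalSubgroup_ofRep ρ)
    fun g _ hg => LinearEquiv.ext fun m => by
      change extendByOne ρ g m = ρ ⟨g, hg⟩ m
      rw [extendByOne_of_mem ρ hg]

end Correspondence

end PartialGModule

end

/-- The partial `kG`-module structures on the one-dimensional space `k`
are in one-to-one correspondence with pairs `(H, λ)` of a subgroup `H ≤ G` together with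
a one-dimensional representation `λ : H → kˣ`. -/
theorem partialGModule_on_field_correspondence (G : Type*) [Group G] (k : Type*) [Field k] :
    Nonempty (PartialGModule G k k ≃ (Σ H : Subgroup G, H →* kˣ)) :=
  ⟨PartialGModule.equivSigmaRep.trans
    (Equiv.sigmaCongrRight fun _ => (LinearEquiv.selfMulEquivUnits k).monoidHomCongrRightEquiv)⟩
end

section
/- Let G be a finite group and k a field with char(k) ∤ |G|. There is a bijective correspondence between subgroups H of G and partial G-gradings of the base field k (i.e. partial actions of k^G on k): the partial action corresponding to H is given by λ(p_g) = (1/|H|)·δ_{gH,H}. -/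
/-!
The axiom `λ_g λ_t = λ_{gt⁻¹} λ_t` alone forces everything: taking `g = t` shows that `λ` is
constant, equal to `λ_1`, on its support, and the same axiom makes the support closed under
`(g, t) ↦ g t⁻¹`, so it is a subgroup `H`. Then `∑ λ = 1` reads `|H| λ_1 = 1`. Conversely the
grading attached to `H` satisfies this axiom because `H` is stable under right multiplication by
its elements, and the convolution axiom follows from it and `∑ λ = 1`.
-/

open scoped Classical

/-- A partial `G`-grading of the base field `k`, i.e. a partial action of the dual group
algebra `k^G` on `k`, written in terms of the scalars `λ_g = p_g · 1`:
`∑ p_g · a = a`, `p_g·(ab) = ∑_l (p_{gl⁻¹}·a)(p_l·b)` and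
`p_g·(p_t·a) = (p_{gt⁻¹}·1)(p_t·a) = (p_t·a)(p_{t⁻¹g}·1)`. -/
def IsPartialGradingOfField (G : Type*) [Group G] [Fintype G] (k : Type*) [Field k]
    (lam : G → k) : Prop :=
  (∑ g : G, lam g = 1) ∧
  (∀ g : G, lam g = ∑ l : G, lam (g * l⁻¹) * lam l) ∧
  (∀ g t : G, lam g * lam t = lam (g * t⁻¹) * lam t) ∧
  (∀ g t : G, lam g * lam t = lam t * lam (t⁻¹ * g))

section PartialGrading

variable {G : Type*} [Group G] {k : Type*} [Field k]

noncomputable def subgroupGrading (k : Type*) [Field k] (H : Subgroup G) : G → k :=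
  fun g => if g ∈ H then (Nat.card H : k)⁻¹ else 0

lemma Subgroup.sum_ite_mem_const [Fintype G] (H : Subgroup G) (c : k) :
    ∑ g : G, (if g ∈ H then c else 0) = Nat.card H * c := by
  rw [← Finset.sum_filter, Finset.sum_const, nsmul_eq_mul, Nat.card_eq_fintype_card,
    Fintype.card_subtype]

lemma Subgroup.natCast_card_ne_zero [Fintype G] (hchar : (Fintype.card G : k) ≠ 0)
    (H : Subgroup G) : (Nat.card H : k) ≠ 0 :=
  ne_zero_of_dvd_ne_zero (by rwa [Nat.card_eq_fintype_card])
    (Nat.cast_dvd_cast H.card_subgroup_dvd_card)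

lemma eq_sum_mul_inv_mul_of_sum_eq_one [Fintype G] {lam : G → k} (hsum : ∑ g, lam g = 1)
    (hmul : ∀ g t, lam g * lam t = lam (g * t⁻¹) * lam t) (g : G) :
    lam g = ∑ l, lam (g * l⁻¹) * lam l := by
  simp_rw [← hmul, ← Finset.mul_sum, hsum, mul_one]

section SubgroupGrading

variable (H : Subgroup G)

lemma sum_subgroupGrading [Fintype G] (hH : (Nat.card H : k) ≠ 0) :
    ∑ g, subgroupGrading k H g = 1 :=
  (H.sum_ite_mem_const _).trans (mul_inv_cancel₀ hH)

lemma subgroupGrading_mul_eq_mul_inv_mul (g t : G) :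
    subgroupGrading k H g * subgroupGrading k H t
      = subgroupGrading k H (g * t⁻¹) * subgroupGrading k H t := by
  by_cases ht : t ∈ H
  · simp [subgroupGrading, H.mul_mem_cancel_right (H.inv_mem ht)]
  · simp [subgroupGrading, ht]

lemma subgroupGrading_mul_eq_mul_inv_mul_left (g t : G) :
    subgroupGrading k H g * subgroupGrading k H t
      = subgroupGrading k H t * subgroupGrading k H (t⁻¹ * g) := by
  by_cases ht : t ∈ H
  · simp [subgroupGrading, H.mul_mem_cancel_left (H.inv_mem ht), mul_comm]
  · simp [subgroupGrading, ht]

lemma isPartialGradingOfField_subgroupGrading [Fintype G] (hH : (Nat.card H : k) ≠ 0) :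
    IsPartialGradingOfField G k (subgroupGrading k H) :=
  ⟨sum_subgroupGrading H hH,
    eq_sum_mul_inv_mul_of_sum_eq_one (sum_subgroupGrading H hH)
      (subgroupGrading_mul_eq_mul_inv_mul H),
    subgroupGrading_mul_eq_mul_inv_mul H, subgroupGrading_mul_eq_mul_inv_mul_left H⟩

lemma mem_iff_subgroupGrading_ne_zero (hH : (Nat.card H : k) ≠ 0) (g : G) :
    g ∈ H ↔ subgroupGrading k H g ≠ 0 := by
  unfold subgroupGrading
  split_ifs with hg
  · exact iff_of_true hg (inv_ne_zero hH)
  · exact iff_of_false hg (not_not.mpr rfl)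

end SubgroupGrading

lemma subgroupGrading_injective [Fintype G] (hchar : (Fintype.card G : k) ≠ 0) :
    Function.Injective (subgroupGrading (G := G) k) := fun H H' h => by
  ext g
  rw [mem_iff_subgroupGrading_ne_zero H (H.natCast_card_ne_zero hchar),
    mem_iff_subgroupGrading_ne_zero H' (H'.natCast_card_ne_zero hchar), h]

lemma eq_apply_one_of_ne_zero {lam : G → k}
    (hmul : ∀ g t, lam g * lam t = lam (g * t⁻¹) * lam t) {g : G} (hg : lam g ≠ 0) :
    lam g = lam 1 :=
  mul_right_cancel₀ hg (by rw [hmul g g, mul_inv_cancel])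

def supportSubgroup [Fintype G] {lam : G → k} (hsum : ∑ g, lam g = 1)
    (hmul : ∀ g t, lam g * lam t = lam (g * t⁻¹) * lam t) : Subgroup G :=
  Subgroup.ofDiv {g | lam g ≠ 0}
    (have ⟨g, _, hg⟩ := Finset.exists_ne_zero_of_sum_ne_zero (hsum ▸ one_ne_zero); ⟨g, hg⟩)
    fun g hg t ht h => mul_ne_zero hg ht (by rw [hmul, h, zero_mul])

section Support

variable [Fintype G] {lam : G → k} (hsum : ∑ g, lam g = 1)
  (hmul : ∀ g t, lam g * lam t = lam (g * t⁻¹) * lam t)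

lemma mem_supportSubgroup {g : G} : g ∈ supportSubgroup hsum hmul ↔ lam g ≠ 0 := Iff.rfl

lemma eq_ite_mem_supportSubgroup (g : G) :
    lam g = if g ∈ supportSubgroup hsum hmul then lam 1 else 0 := by
  by_cases hg : lam g = 0
  · rw [if_neg ((mem_supportSubgroup hsum hmul).not.mpr (not_not.mpr hg)), hg]
  · rw [if_pos ((mem_supportSubgroup hsum hmul).mpr hg), eq_apply_one_of_ne_zero hmul hg]

lemma eq_subgroupGrading_supportSubgroup :
    lam = subgroupGrading k (supportSubgroup hsum hmul) := by
  have hcard : (Nat.card (supportSubgroup hsum hmul) : k) * lam 1 = 1 := by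
    rw [← Subgroup.sum_ite_mem_const, ← hsum]
    exact Finset.sum_congr rfl fun g _ => (eq_ite_mem_supportSubgroup hsum hmul g).symm
  funext g
  rw [eq_ite_mem_supportSubgroup hsum hmul g, eq_inv_of_mul_eq_one_right hcard]
  rfl

end Support

end PartialGrading

/-- For a finite group `G` and a field `k` with `char k ∤ |G|`, the partial
`G`-gradings of `k` are in bijective correspondence with the subgroups `H ≤ G`, the
grading attached to `H` being `λ_g = (1/|H|) δ_{gH,H}`. -/
theorem partial_grading_of_field_iff_subgroup (G : Type*) [Group G] [Fintype G]
    (k : Type*) [Field k] (hchar : (Fintype.card G : k) ≠ 0) :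
    (∀ H : Subgroup G, IsPartialGradingOfField G k
      (fun g => if g ∈ H then ((Nat.card H : k))⁻¹ else 0)) ∧
    (∀ lam : G → k, IsPartialGradingOfField G k lam →
      ∃! H : Subgroup G,
        lam = fun g => if g ∈ H then ((Nat.card H : k))⁻¹ else 0) := by
  refine ⟨fun H => isPartialGradingOfField_subgroupGrading H (H.natCast_card_ne_zero hchar),
    fun lam ⟨hsum, _, hmul, _⟩ => ?_⟩
  have hlam := eq_subgroupGrading_supportSubgroup hsum hmul
  exact ⟨supportSubgroup hsum hmul, hlam,
    fun H hH => subgroupGrading_injective hchar (hH.symm.trans hlam)⟩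
end

section
/- Let G be a finite group, H a normal subgroup of G, and A a G/H-graded algebra (i.e. a k^{G/H}-module algebra with action ▷). Then the formula p_g · a = (1/|H|) q_{gH} ▷ a defines a partial G-grading (partial k^G-action) on A, where q_{gH} denotes the canonical basis element of k^{G/H}. -/
/-!
A `G/H`-grading is in particular a partial `G/H`-grading: the two partial-grading identities for
`q_x ▷ (q_y ▷ a)` follow from `(q_x ▷ 1)(q_y ▷ b) = δ_{x,1} q_y ▷ b` and its mirror image.
Pulling a partial grading back along `G → G/H` preserves all identities once a sum over `G` is
rewritten as `|H|` times a sum over `G/H`; the factor `1/|H|` compensates exactly, since each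
quadratic identity carries it once on the left and twice on the right.
-/

open scoped Classical
open Finset

/-- `r x a` stands for `q_x ▷ a`, for a `k^Q`-module algebra structure on `A`. -/
structure IsGrading {k A Q : Type*} [CommSemiring k] [Semiring A] [Module k A] [Group Q]
    [Fintype Q] [DecidableEq Q] (r : Q → A →ₗ[k] A) : Prop where
  sum_apply (a : A) : ∑ x, r x a = a
  apply_mul (x : Q) (a b : A) : r x (a * b) = ∑ y, r (x * y⁻¹) a * r y b
  apply_apply (x y : Q) (a : A) : r x (r y a) = if x = y then r y a else 0

/-- `p g a` stands for `p_g · a`. -/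
structure IsPartialGrading {k A G : Type*} [CommSemiring k] [Semiring A] [Module k A] [Group G]
    [Fintype G] (p : G → A →ₗ[k] A) : Prop where
  sum_apply (a : A) : ∑ g, p g a = a
  apply_mul (g : G) (a b : A) : p g (a * b) = ∑ l, p (g * l⁻¹) a * p l b
  apply_apply_eq_apply_one_mul (g t : G) (a : A) : p g (p t a) = p (g * t⁻¹) 1 * p t a
  apply_apply_eq_mul_apply_one (g t : G) (a : A) : p g (p t a) = p t a * p (t⁻¹ * g) 1

namespace IsGrading

variable {k A Q : Type*} [CommSemiring k] [Semiring A] [Module k A] [Group Q] [Fintype Q]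
  [DecidableEq Q] {r : Q → A →ₗ[k] A}

theorem apply_one_mul (hr : IsGrading r) (x y : Q) (b : A) :
    r x 1 * r y b = if x = 1 then r y b else 0 := by
  have h := hr.apply_mul (x * y) 1 (r y b)
  simp only [one_mul, hr.apply_apply, mul_ite, mul_zero, sum_ite_eq', mem_univ,
    if_true, mul_inv_cancel_right, mul_eq_right] at h
  exact h.symm

theorem mul_apply_one (hr : IsGrading r) (x y : Q) (a : A) :
    r y a * r x 1 = if x = 1 then r y a else 0 := by
  have h := hr.apply_mul (y * x) (r y a) 1
  simp only [mul_one, hr.apply_apply, ite_mul, zero_mul, mul_assoc, mul_eq_left, mul_inv_eq_one,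
    sum_ite_eq, mem_univ, if_true] at h
  exact h.symm

theorem isPartialGrading (hr : IsGrading r) : IsPartialGrading r where
  sum_apply := hr.sum_apply
  apply_mul := hr.apply_mul
  apply_apply_eq_apply_one_mul g t a := by
    rw [hr.apply_apply, hr.apply_one_mul]
    exact if_congr mul_inv_eq_one.symm rfl rfl
  apply_apply_eq_mul_apply_one g t a := by
    rw [hr.apply_apply, hr.mul_apply_one]
    exact if_congr (inv_mul_eq_one.trans eq_comm).symm rfl rfl

end IsGrading

theorem QuotientGroup.sum_mk_eq_card_smul {G M : Type*} [Group G] [Fintype G] [AddCommMonoid M]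
    (H : Subgroup G) (f : G ⧸ H → M) : ∑ g : G, f g = Nat.card H • ∑ x, f x := by
  rw [← sum_fiberwise univ (fun g : G => (g : G ⧸ H)), smul_sum]
  refine Fintype.sum_congr _ _ fun x => ?_
  have hfiber : #{g : G | (g : G ⧸ H) = x} = Nat.card H := by
    simpa [Nat.card_eq_fintype_card, Fintype.card_subtype] using
      QuotientGroup.card_preimage_mk H {x}
  rw [sum_congr rfl fun g hg => congrArg f (mem_filter.mp hg).2, sum_const,
    hfiber]

theorem IsPartialGrading.comp_quotientMk {k A G : Type*} [Field k] [Semiring A] [Algebra k A]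
    [Group G] [Fintype G] {H : Subgroup G} [H.Normal] {r : G ⧸ H → A →ₗ[k] A}
    (hr : IsPartialGrading r) (hH : (Nat.card H : k) ≠ 0) :
    IsPartialGrading fun g : G => (Nat.card H : k)⁻¹ • r g where
  sum_apply a := by
    simp only [LinearMap.smul_apply]
    rw [← smul_sum, QuotientGroup.sum_mk_eq_card_smul H (fun x => r x a), hr.sum_apply,
      ← Nat.cast_smul_eq_nsmul k, inv_smul_smul₀ hH]
  apply_mul g a b := by
    simp only [LinearMap.smul_apply, smul_mul_smul_comm, QuotientGroup.mk_mul,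
      QuotientGroup.mk_inv]
    rw [← smul_sum, QuotientGroup.sum_mk_eq_card_smul H (fun y => r (g * y⁻¹) a * r y b),
      ← hr.apply_mul, ← Nat.cast_smul_eq_nsmul k, smul_smul, mul_assoc, inv_mul_cancel₀ hH,
      mul_one]
  apply_apply_eq_apply_one_mul g t a := by
    simp only [LinearMap.smul_apply, map_smul, smul_smul, smul_mul_smul_comm,
      QuotientGroup.mk_mul, QuotientGroup.mk_inv, hr.apply_apply_eq_apply_one_mul]
  apply_apply_eq_mul_apply_one g t a := by
    simp only [LinearMap.smul_apply, map_smul, smul_smul, smul_mul_smul_comm,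
      QuotientGroup.mk_mul, QuotientGroup.mk_inv, hr.apply_apply_eq_mul_apply_one]

/-- Let `G` be a finite group, `H ⊴ G`, and let `A` be a `G/H`-graded
algebra, i.e. a `k^{G/H}`-module algebra with action `q_{gH} ▷ a = r (gH) a`.  Then
`p_g · a := (1/|H|) q_{gH} ▷ a` is a partial `G`-grading (partial `k^G`-action) on `A`. -/
theorem quotient_grading_gives_partial_grading
    (k : Type*) [Field k] (G : Type*) [Group G] [Fintype G]
    (hchar : (Fintype.card G : k) ≠ 0)
    (H : Subgroup G) [H.Normal]
    (A : Type*) [Ring A] [Algebra k A]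
    (r : G ⧸ H → (A →ₗ[k] A))
    -- `A` is `G/H`-graded:
    (hsum : ∀ a : A, ∑ x : G ⧸ H, r x a = a)
    (hmul : ∀ (x : G ⧸ H) (a b : A), r x (a * b) = ∑ y : G ⧸ H, r (x * y⁻¹) a * r y b)
    (hproj : ∀ (x y : G ⧸ H) (a : A), r x (r y a) = if x = y then r y a else 0) :
    -- `p_g · a := (1/|H|) • r gH a` is a partial `G`-grading of `A`:
    (∀ a : A, ∑ g : G, ((Nat.card H : k))⁻¹ • r (g : G ⧸ H) a = a) ∧
    (∀ (g : G) (a b : A),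
      ((Nat.card H : k))⁻¹ • r (g : G ⧸ H) (a * b) =
        ∑ l : G, (((Nat.card H : k))⁻¹ • r ((g * l⁻¹ : G) : G ⧸ H) a) *
          (((Nat.card H : k))⁻¹ • r (l : G ⧸ H) b)) ∧
    (∀ (g t : G) (a : A),
      ((Nat.card H : k))⁻¹ • r (g : G ⧸ H) (((Nat.card H : k))⁻¹ • r (t : G ⧸ H) a) =
        (((Nat.card H : k))⁻¹ • r ((g * t⁻¹ : G) : G ⧸ H) (1 : A)) *
          (((Nat.card H : k))⁻¹ • r (t : G ⧸ H) a)) ∧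
    (∀ (g t : G) (a : A),
      ((Nat.card H : k))⁻¹ • r (g : G ⧸ H) (((Nat.card H : k))⁻¹ • r (t : G ⧸ H) a) =
        (((Nat.card H : k))⁻¹ • r (t : G ⧸ H) a) *
          (((Nat.card H : k))⁻¹ • r ((t⁻¹ * g : G) : G ⧸ H) (1 : A))) := by
  have hH : (Nat.card H : k) ≠ 0 :=
    ne_zero_of_dvd_ne_zero (Nat.card_eq_fintype_card (α := G) ▸ hchar)
      (Nat.cast_dvd_cast H.card_subgroup_dvd_card)
  have hp := (IsGrading.isPartialGrading ⟨hsum, hmul, hproj⟩).comp_quotientMk hH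
  exact ⟨hp.sum_apply, hp.apply_mul, hp.apply_apply_eq_apply_one_mul,
    hp.apply_apply_eq_mul_apply_one⟩
end

section
/- Let G be a finite group, k a field with char(k) ∤ |G|, and H a normal subgroup of G. The assignment q_{gH} ▷ a := |H|·(p_g · a) establishes a bijection between linear partial G-gradings of A with linear support H and G/H-gradings of A; its inverse sends a G/H-grading ▷ to p_g·a := (1/|H|) q_{gH} ▷ a. In particular, for any linear partial G-grading with linear support H one has p_g·a = (1/|H|) Σ_{t ∈ gH} p_t·a. -/
open scoped Classical

variable (k : Type*) [Field k] (G : Type*) [Group G] [Fintype G]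
variable (A : Type*) [Ring A] [Algebra k A]

/-- A partial `G`-grading of `A`: a partial action of `k^G` on `A`, written in terms of
the operators `p g = (p_g · -)`. -/
def IsPartialGGrading (p : G → (A →ₗ[k] A)) : Prop :=
  (∀ a : A, ∑ g : G, p g a = a) ∧
  (∀ (g : G) (a b : A), p g (a * b) = ∑ l : G, p (g * l⁻¹) a * p l b) ∧
  (∀ (g t : G) (a : A), p g (p t a) = p (g * t⁻¹) 1 * p t a) ∧
  (∀ (g t : G) (a : A), p g (p t a) = p t a * p (t⁻¹ * g) 1)

/-- The partial grading `p` is linear with linear support `H`: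
`p_g · 1 = (1/|H|) δ_{gH,H} 1`. -/
def HasLinearSupport (H : Subgroup G) (p : G → (A →ₗ[k] A)) : Prop :=
  ∀ g : G, p g 1 = (if g ∈ H then ((Nat.card H : k))⁻¹ else 0) • (1 : A)

/-- A (global) `G/H`-grading of `A`: a `k^{G/H}`-module algebra structure, written in
terms of the operators `q x = (q_x ▷ -)`. -/
def IsQuotientGrading (H : Subgroup G) [H.Normal] (q : G ⧸ H → (A →ₗ[k] A)) : Prop :=
  (∀ a : A, ∑ x : G ⧸ H, q x a = a) ∧
  (∀ (x : G ⧸ H) (a b : A), q x (a * b) = ∑ y : G ⧸ H, q (x * y⁻¹) a * q y b) ∧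
  (∀ (x y : G ⧸ H) (a : A), q x (q y a) = if x = y then q y a else 0)

/-!
A linear partial grading with support `H` satisfies `p_g · a = (1/|H|) Σ_{t ∈ gH} p_t · a`:
expand `a = Σ_t p_t · a` and use `p_g · (p_t · a) = (p_t · a)(p_{t⁻¹g} · 1)`. So `p` is constant
on the cosets of `H`, i.e. `p_g = (1/|H|) q_{gH}` for some `q`. For operators of this form each
partial-grading axiom is equivalent to the corresponding `G/H`-grading axiom, because a sum over
`G` of a function of `gH` is `|H|` times the sum over `G/H`, and linear support says exactly
`q_x ▷ 1 = δ_{x,1}`, which every `G/H`-grading satisfies (`q_1 ▷ 1` is a left unit for every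
`q_z ▷ a`, hence equals `1`).
-/

section Cosets

variable {G : Type*} [Group G] [Fintype G] (H : Subgroup G)

theorem Subgroup.sum_comp_mk {M : Type*} [AddCommMonoid M] (F : G ⧸ H → M) :
    ∑ g : G, F g = Nat.card H • ∑ x, F x := by
  rw [Fintype.sum_equiv (Subgroup.groupEquivQuotientProdSubgroup (s := H)) (fun g : G => F g)
    (fun z => F z.1) fun _ => rfl, Fintype.sum_prod_type, Finset.smul_sum]
  simp [Nat.card_eq_fintype_card]

theorem Subgroup.sum_ite_mk_eq {M : Type*} [AddCommMonoid M] (g : G) (f : G → M) :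
    ∑ t : G, (if (t : G ⧸ H) = g then f t else 0) = ∑ h : H, f (g * h) := by
  rw [← Equiv.sum_comp (Equiv.mulLeft g)]
  simp only [Equiv.coe_mulLeft, QuotientGroup.eq, mul_inv_rev, inv_mul_cancel_right, inv_mem_iff]
  rw [← Finset.sum_filter]
  exact Finset.sum_subtype _ (by simp) _

theorem Subgroup.natCard_cast_ne_zero {R : Type*} [Semiring R]
    (hG : (Fintype.card G : R) ≠ 0) : (Nat.card H : R) ≠ 0 := by
  rw [← Nat.card_eq_fintype_card, ← H.card_mul_index, Nat.cast_mul] at hG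
  exact left_ne_zero_of_mul hG

end Cosets

section Gradings

variable {k : Type*} [Field k] {G : Type*} [Group G] {A : Type*} [Ring A] [Algebra k A]

theorem IsQuotientGrading.apply_one [Fintype G] {H : Subgroup G} [H.Normal]
    {q : G ⧸ H → (A →ₗ[k] A)} (hq : IsQuotientGrading k G A H q) (x : G ⧸ H) :
    q x 1 = if x = 1 then 1 else 0 := by
  obtain ⟨hsum, hmul, hcomp⟩ := hq
  have hunit_mul : ∀ z a, q z a = q 1 1 * q z a := fun z a => by
    calc q z a = q z (1 * q z a) := by rw [one_mul, hcomp, if_pos rfl]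
      _ = q 1 1 * q z a := by
        simp only [hmul, hcomp, mul_ite, mul_zero, Finset.sum_ite_eq', Finset.mem_univ, if_true,
          mul_inv_cancel]
  have hunit : q 1 1 = 1 := by
    calc q 1 1 = ∑ z, q 1 1 * q z 1 := by rw [← Finset.mul_sum, hsum, mul_one]
      _ = ∑ z, q z 1 := Finset.sum_congr rfl fun z _ => (hunit_mul z 1).symm
      _ = 1 := hsum 1
  rw [← hunit, hcomp, eq_comm]

section LiftGrading

variable {H : Subgroup G}

noncomputable def liftGrading (H : Subgroup G) (q : G ⧸ H → (A →ₗ[k] A)) :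
    G → (A →ₗ[k] A) :=
  fun g => (Nat.card H : k)⁻¹ • q g

theorem sum_liftGrading_apply [Fintype G] (hc : (Nat.card H : k) ≠ 0)
    (q : G ⧸ H → (A →ₗ[k] A)) (a : A) :
    ∑ g, liftGrading H q g a = ∑ x, q x a := by
  simp only [liftGrading, LinearMap.smul_apply, ← Finset.smul_sum]
  rw [H.sum_comp_mk (fun x => q x a), ← Nat.cast_smul_eq_nsmul k, inv_smul_smul₀ hc]

variable [H.Normal]

theorem sum_liftGrading_mul_liftGrading [Fintype G] (hc : (Nat.card H : k) ≠ 0)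
    (q : G ⧸ H → (A →ₗ[k] A)) (g : G) (a b : A) :
    ∑ l, liftGrading H q (g * l⁻¹) a * liftGrading H q l b =
      (Nat.card H : k)⁻¹ • ∑ y, q (g * y⁻¹) a * q y b := by
  simp only [liftGrading, LinearMap.smul_apply, smul_mul_smul_comm, ← Finset.smul_sum,
    QuotientGroup.mk_mul, QuotientGroup.mk_inv]
  rw [H.sum_comp_mk (fun y => q (g * y⁻¹) a * q y b), ← Nat.cast_smul_eq_nsmul k, mul_smul,
    inv_smul_smul₀ hc]

theorem hasLinearSupport_liftGrading_iff (hc : (Nat.card H : k) ≠ 0)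
    (q : G ⧸ H → (A →ₗ[k] A)) :
    HasLinearSupport k G A H (liftGrading H q) ↔ ∀ x, q x 1 = if x = 1 then 1 else 0 := by
  rw [QuotientGroup.mk_surjective.forall]
  refine forall_congr' fun g => ?_
  simp only [liftGrading, LinearMap.smul_apply, QuotientGroup.eq_one_iff]
  by_cases hg : g ∈ H <;>
    simp only [hg, if_true, if_false, zero_smul, smul_eq_zero, inv_eq_zero, hc, false_or,
      smul_right_inj (inv_ne_zero hc)]

theorem liftGrading_map_mul_iff [Fintype G] (hc : (Nat.card H : k) ≠ 0)
    (q : G ⧸ H → (A →ₗ[k] A)) :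
    (∀ g a b, liftGrading H q g (a * b) =
        ∑ l, liftGrading H q (g * l⁻¹) a * liftGrading H q l b) ↔
      ∀ x a b, q x (a * b) = ∑ y, q (x * y⁻¹) a * q y b := by
  rw [QuotientGroup.mk_surjective.forall]
  refine forall_congr' fun g => forall₂_congr fun a b => ?_
  rw [sum_liftGrading_mul_liftGrading hc]
  simp only [liftGrading, LinearMap.smul_apply, smul_right_inj (inv_ne_zero hc)]

theorem liftGrading_comp_iff_left (hc : (Nat.card H : k) ≠ 0) {q : G ⧸ H → (A →ₗ[k] A)}
    (hunit : ∀ x, q x 1 = if x = 1 then 1 else 0) :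
    (∀ g t a, liftGrading H q g (liftGrading H q t a) =
        liftGrading H q (g * t⁻¹) 1 * liftGrading H q t a) ↔
      ∀ x y a, q x (q y a) = if x = y then q y a else 0 := by
  have key : ∀ (g t : G) a, liftGrading H q g (liftGrading H q t a) =
      liftGrading H q (g * t⁻¹) 1 * liftGrading H q t a ↔
        q g (q t a) = if (g : G ⧸ H) = t then q t a else 0 := fun g t a => by
    simp only [liftGrading, LinearMap.smul_apply, map_smul, hunit, QuotientGroup.mk_mul,
      QuotientGroup.mk_inv, mul_inv_eq_one, smul_mul_smul_comm, ite_mul, one_mul, zero_mul]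
    rw [← mul_smul, smul_right_inj (mul_ne_zero (inv_ne_zero hc) (inv_ne_zero hc))]
  refine ⟨fun h x y a => ?_, fun h g t a => (key g t a).2 (h _ _ a)⟩
  induction x using QuotientGroup.induction_on
  induction y using QuotientGroup.induction_on
  exact (key _ _ a).1 (h _ _ a)

theorem liftGrading_comp_iff_right (hc : (Nat.card H : k) ≠ 0) {q : G ⧸ H → (A →ₗ[k] A)}
    (hunit : ∀ x, q x 1 = if x = 1 then 1 else 0) :
    (∀ g t a, liftGrading H q g (liftGrading H q t a) =
        liftGrading H q t a * liftGrading H q (t⁻¹ * g) 1) ↔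
      ∀ x y a, q x (q y a) = if x = y then q y a else 0 := by
  have key : ∀ (g t : G) a, liftGrading H q g (liftGrading H q t a) =
      liftGrading H q t a * liftGrading H q (t⁻¹ * g) 1 ↔
        q g (q t a) = if (g : G ⧸ H) = t then q t a else 0 := fun g t a => by
    simp only [liftGrading, LinearMap.smul_apply, map_smul, hunit, QuotientGroup.mk_mul,
      QuotientGroup.mk_inv, inv_mul_eq_one, smul_mul_smul_comm, mul_ite, mul_one, mul_zero,
      eq_comm (a := (t : G ⧸ H))]
    rw [← mul_smul, smul_right_inj (mul_ne_zero (inv_ne_zero hc) (inv_ne_zero hc))]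
  refine ⟨fun h x y a => ?_, fun h g t a => (key g t a).2 (h _ _ a)⟩
  induction x using QuotientGroup.induction_on
  induction y using QuotientGroup.induction_on
  exact (key _ _ a).1 (h _ _ a)

theorem isPartialGGrading_liftGrading_and_hasLinearSupport_iff [Fintype G]
    (hc : (Nat.card H : k) ≠ 0) {q : G ⧸ H → (A →ₗ[k] A)} :
    IsPartialGGrading k G A (liftGrading H q) ∧ HasLinearSupport k G A H (liftGrading H q) ↔
      IsQuotientGrading k G A H q := by
  rw [hasLinearSupport_liftGrading_iff hc]
  constructor
  · rintro ⟨⟨hsum, hmul, hcomp, -⟩, hunit⟩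
    refine ⟨fun a => ?_, (liftGrading_map_mul_iff hc q).1 hmul,
      (liftGrading_comp_iff_left hc hunit).1 hcomp⟩
    rw [← sum_liftGrading_apply hc, hsum]
  · intro hq
    have hunit := hq.apply_one
    obtain ⟨hsum, hmul, hcomp⟩ := hq
    refine ⟨⟨fun a => ?_, (liftGrading_map_mul_iff hc q).2 hmul,
      (liftGrading_comp_iff_left hc hunit).2 hcomp,
      (liftGrading_comp_iff_right hc hunit).2 hcomp⟩, hunit⟩
    rw [sum_liftGrading_apply hc, hsum]

end LiftGrading

section PartialGrading

variable [Fintype G] {H : Subgroup G} {p : G → (A →ₗ[k] A)}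

theorem IsPartialGGrading.apply_eq_smul_sum_coset (hp : IsPartialGGrading k G A p)
    (hs : HasLinearSupport k G A H p) (g : G) (a : A) :
    p g a = (Nat.card H : k)⁻¹ • ∑ t : G, if (t : G ⧸ H) = g then p t a else 0 := by
  obtain ⟨hsum, -, -, hcomp⟩ := hp
  conv_lhs => rw [← hsum a, map_sum]
  rw [Finset.smul_sum]
  refine Finset.sum_congr rfl fun t _ => ?_
  rw [hcomp, hs]
  by_cases hmem : (t : G ⧸ H) = g
  · rw [if_pos hmem, if_pos (QuotientGroup.eq.1 hmem), mul_smul_comm, mul_one]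
  · rw [if_neg hmem, if_neg (mt QuotientGroup.eq.2 hmem), zero_smul, mul_zero, smul_zero]

theorem IsPartialGGrading.apply_eq_smul_sum_subgroup (hp : IsPartialGGrading k G A p)
    (hs : HasLinearSupport k G A H p) (g : G) (a : A) :
    p g a = (Nat.card H : k)⁻¹ • ∑ h : H, p (g * h) a := by
  rw [hp.apply_eq_smul_sum_coset hs, H.sum_ite_mk_eq]

theorem IsPartialGGrading.eq_of_mk_eq (hp : IsPartialGGrading k G A p)
    (hs : HasLinearSupport k G A H p) {g g' : G} (h : (g : G ⧸ H) = g') : p g = p g' := by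
  ext a
  rw [hp.apply_eq_smul_sum_coset hs g, hp.apply_eq_smul_sum_coset hs g', h]

theorem IsPartialGGrading.liftGrading_smul_out (hc : (Nat.card H : k) ≠ 0)
    (hp : IsPartialGGrading k G A p) (hs : HasLinearSupport k G A H p) :
    liftGrading H (fun x => (Nat.card H : k) • p (Quotient.out x)) = p := by
  funext g
  rw [liftGrading, inv_smul_smul₀ hc]
  exact hp.eq_of_mk_eq hs (QuotientGroup.out_eq' _)

end PartialGrading

end Gradings

/-- For `char k ∤ |G|` and `H ⊴ G`, the assignment
`q_{gH} ▷ a := |H| (p_g · a)` is a bijection between linear partial `G`-gradings of `A`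
with linear support `H` and `G/H`-gradings of `A`, with inverse
`p_g · a := (1/|H|) q_{gH} ▷ a`; in particular `p_g · a = (1/|H|) ∑_{t ∈ gH} p_t · a`. -/
theorem linear_partial_grading_iff_quotient_grading
    (hchar : (Fintype.card G : k) ≠ 0) (H : Subgroup G) [H.Normal] :
    -- `down` sends `G/H`-gradings to linear partial `G`-gradings with support `H`
    (∀ q : G ⧸ H → (A →ₗ[k] A), IsQuotientGrading k G A H q →
      IsPartialGGrading k G A (fun g => ((Nat.card H : k))⁻¹ • q (g : G ⧸ H)) ∧
      HasLinearSupport k G A H (fun g => ((Nat.card H : k))⁻¹ • q (g : G ⧸ H)) ∧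
      -- `up ∘ down = id`
      (fun x : G ⧸ H => (Nat.card H : k) •
        (((Nat.card H : k))⁻¹ • q ((Quotient.out x : G) : G ⧸ H))) = q) ∧
    -- `up` sends linear partial `G`-gradings with support `H` to `G/H`-gradings
    (∀ p : G → (A →ₗ[k] A), IsPartialGGrading k G A p → HasLinearSupport k G A H p →
      IsQuotientGrading k G A H (fun x => (Nat.card H : k) • p (Quotient.out x)) ∧
      -- `down ∘ up = id`
      (fun g : G => ((Nat.card H : k))⁻¹ •
        ((Nat.card H : k) • p (Quotient.out ((g : G ⧸ H))))) = p) ∧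
    -- in particular `p_g · a = (1/|H|) ∑_{t ∈ gH} p_t · a`
    (∀ p : G → (A →ₗ[k] A), IsPartialGGrading k G A p → HasLinearSupport k G A H p →
      ∀ (g : G) (a : A),
        p g a = ((Nat.card H : k))⁻¹ • ∑ h : H, p (g * (h : G)) a) := by
  have hc : (Nat.card H : k) ≠ 0 := H.natCard_cast_ne_zero hchar
  refine ⟨fun q hq => ?_, fun p hp hs => ?_, fun p hp hs => hp.apply_eq_smul_sum_subgroup hs⟩
  · obtain ⟨hpartial, hsupport⟩ :=
      (isPartialGGrading_liftGrading_and_hasLinearSupport_iff hc).2 hq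
    refine ⟨hpartial, hsupport, funext fun x => ?_⟩
    rw [smul_inv_smul₀ hc, QuotientGroup.out_eq']
  · have hlift := hp.liftGrading_smul_out hc hs
    refine ⟨(isPartialGGrading_liftGrading_and_hasLinearSupport_iff hc).1 ?_, hlift⟩
    rw [hlift]
    exact ⟨hp, hs⟩
end

section
/- Let k be a field of characteristic ≠ 2 and A an algebra with a partial Z₂-grading, i.e. a partial action of H = (kC₂)* on A. Let A = A₀ ⊕ A₁ ⊕ A_{1/2} be the eigenspace decomposition of the operator a ↦ p_g·a with eigenvalues 0, 1, 1/2. Then: (1) B = A₀ ⊕ A₁ is a subalgebra of A which is Z₂-graded with B_0̄ = A₀ and B_1̄ = A₁; (2) A_{1/2} is a two-sided ideal of A; (3) 1_A = u + v with u ∈ A₀, v ∈ A_{1/2} orthogonal idempotents; (4) uAv = vAu = 0, so A ≅ B × A_{1/2} as algebras. -/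
/-! Write `e = p_g·1` and `T = p_g·`. The axioms for `p_g·(p_e·a)` and `p_g·(p_g·a)` make `e`
central with `2 e (T a) = e a`; hence `v = 2e` is a central idempotent and
`T (T a) = T a - e a / 2`. The product rule alone shows that the `1/2`-eigenspace is an ideal, and
`e` lies in it, so `T (e a) = e a / 2`. Together these give `T (2T - 1) (T - 1) = 0`, hence the
eigenspace decomposition, while `1 = (1 - v) + v` splits `A` into the blocks `B` and `A_{1/2}`. -/

section EigenDecomposition

variable {k M : Type*} [Field k] [AddCommGroup M] [Module k M]

theorem mem_ker_sub_id_iff {T : M →ₗ[k] M} {x : M} :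
    x ∈ LinearMap.ker (T - LinearMap.id) ↔ T x = x := by
  simp [sub_eq_zero]

theorem mem_ker_sub_smul_id_iff {T : M →ₗ[k] M} {c : k} {x : M} :
    x ∈ LinearMap.ker (T - c • LinearMap.id) ↔ T x = c • x := by
  simp [sub_eq_zero]

/-- The projections onto the three eigenspaces are the Lagrange interpolation polynomials
`(2T - 1)(T - 1)`, `T(2T - 1)` and `-4T(T - 1)` of the roots `0`, `1`, `1/2`. -/
theorem existsUnique_eigen_decomposition_of_cubic (hchar : (2 : k) ≠ 0) (T : M →ₗ[k] M)
    (hT : ∀ a, (2 : k) • T (T (T a)) - (3 : k) • T (T a) + T a = 0) (a : M) :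
    ∃! t : M × M × M,
      t.1 ∈ LinearMap.ker T ∧
      t.2.1 ∈ LinearMap.ker (T - LinearMap.id) ∧
      t.2.2 ∈ LinearMap.ker (T - (2 : k)⁻¹ • LinearMap.id) ∧
      a = t.1 + t.2.1 + t.2.2 := by
  simp_rw [mem_ker_sub_id_iff, mem_ker_sub_smul_id_iff, LinearMap.mem_ker]
  refine ⟨⟨(2 : k) • T (T a) - (3 : k) • T a + a, (2 : k) • T (T a) - T a,
    (4 : k) • T a - (4 : k) • T (T a)⟩, ⟨?_, ?_, ?_, ?_⟩, ?_⟩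
  · simpa using hT a
  · simp only [map_sub, map_smul]
    linear_combination (norm := module) hT a
  · simp only [map_sub, map_smul]
    linear_combination (norm := skip) (-(2 : k)) • hT a
    match_scalars <;> field_simp <;> ring
  · module
  · rintro ⟨x, y, z⟩ ⟨hx, hy, hz, rfl⟩
    dsimp only at hx hy hz
    have hTa : T (x + y + z) = y + (2 : k)⁻¹ • z := by simp [hx, hy, hz]
    have hTTa : T (T (x + y + z)) = y + (2 : k)⁻¹ • (2 : k)⁻¹ • z := by
      rw [hTa, map_add, map_smul, hy, hz]
    rw [hTTa, hTa, Prod.mk.injEq, Prod.mk.injEq]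
    refine ⟨?_, ?_, ?_⟩ <;> match_scalars <;> field_simp <;> ring

end EigenDecomposition

theorem Commute.mul_mul_eq_zero {R : Type*} [SemigroupWithZero R] {p q a : R}
    (hpa : Commute p a) (hpq : p * q = 0) : p * a * q = 0 := by
  rw [hpa.eq, mul_assoc, hpq, mul_zero]

section PartialGrading

variable {k A : Type*} [Field k] [Ring A] [Algebra k A] {Te Tg : A →ₗ[k] A}

theorem tg_mul_eq_zero (hmul_g : ∀ a b : A, Tg (a * b) = Te a * Tg b + Tg a * Te b) {a b : A}
    (ha : Tg a = 0) (hb : Tg b = 0) : Tg (a * b) = 0 := by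
  rw [hmul_g, ha, hb, mul_zero, zero_mul, add_zero]

theorem tg_mul_eq_mul_of_eq_zero_of_eq_self (hsum : ∀ a : A, Te a + Tg a = a)
    (hmul_g : ∀ a b : A, Tg (a * b) = Te a * Tg b + Tg a * Te b) {a b : A}
    (ha : Tg a = 0) (hb : Tg b = b) : Tg (a * b) = a * b := by
  rw [hmul_g, ha, hb, eq_sub_of_add_eq (hsum a), ha, sub_zero, zero_mul, add_zero]

theorem tg_mul_eq_mul_of_eq_self_of_eq_zero (hsum : ∀ a : A, Te a + Tg a = a)
    (hmul_g : ∀ a b : A, Tg (a * b) = Te a * Tg b + Tg a * Te b) {a b : A}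
    (ha : Tg a = a) (hb : Tg b = 0) : Tg (a * b) = a * b := by
  rw [hmul_g, hb, ha, eq_sub_of_add_eq (hsum b), hb, sub_zero, mul_zero, zero_add]

theorem tg_mul_eq_zero_of_eq_self (hsum : ∀ a : A, Te a + Tg a = a)
    (hmul_g : ∀ a b : A, Tg (a * b) = Te a * Tg b + Tg a * Te b) {a b : A}
    (ha : Tg a = a) (hb : Tg b = b) : Tg (a * b) = 0 := by
  rw [hmul_g, eq_sub_of_add_eq (hsum a), eq_sub_of_add_eq (hsum b), ha, hb, sub_self, sub_self,
    zero_mul, mul_zero, add_zero]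

theorem te_eq_half_smul (hchar : (2 : k) ≠ 0) (hsum : ∀ a : A, Te a + Tg a = a) {a : A}
    (ha : Tg a = (2 : k)⁻¹ • a) : Te a = (2 : k)⁻¹ • a := by
  rw [eq_sub_of_add_eq (hsum a), ha]
  match_scalars
  field_simp
  ring

theorem tg_mul_eq_half_smul_of_right (hchar : (2 : k) ≠ 0) (hsum : ∀ a : A, Te a + Tg a = a)
    (hmul_g : ∀ a b : A, Tg (a * b) = Te a * Tg b + Tg a * Te b) {a : A}
    (ha : Tg a = (2 : k)⁻¹ • a) (x : A) : Tg (x * a) = (2 : k)⁻¹ • (x * a) := by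
  rw [hmul_g, ha, te_eq_half_smul hchar hsum ha, mul_smul_comm, mul_smul_comm, ← smul_add,
    ← add_mul, hsum]

theorem tg_mul_eq_half_smul_of_left (hchar : (2 : k) ≠ 0) (hsum : ∀ a : A, Te a + Tg a = a)
    (hmul_g : ∀ a b : A, Tg (a * b) = Te a * Tg b + Tg a * Te b) {a : A}
    (ha : Tg a = (2 : k)⁻¹ • a) (x : A) : Tg (a * x) = (2 : k)⁻¹ • (a * x) := by
  rw [hmul_g, ha, te_eq_half_smul hchar hsum ha, smul_mul_assoc, smul_mul_assoc, ← smul_add,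
    ← mul_add, add_comm, hsum]

theorem two_smul_tg_one_mul_tg (hsum : ∀ a : A, Te a + Tg a = a)
    (hge : ∀ a : A, Tg (Te a) = Tg 1 * Te a) (hgg : ∀ a : A, Tg (Tg a) = Te 1 * Tg a) (a : A) :
    (2 : k) • (Tg 1 * Tg a) = Tg 1 * a := by
  have h := congrArg Tg (hsum a)
  rw [map_add, hge, hgg, eq_sub_of_add_eq (hsum a), eq_sub_of_add_eq (hsum 1)] at h
  simp only [mul_sub, sub_mul, one_mul] at h
  linear_combination (norm := module) -h

theorem tg_tg (hchar : (2 : k) ≠ 0) (hsum : ∀ a : A, Te a + Tg a = a)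
    (hge : ∀ a : A, Tg (Te a) = Tg 1 * Te a) (hgg : ∀ a : A, Tg (Tg a) = Te 1 * Tg a) (a : A) :
    Tg (Tg a) = Tg a - (2 : k)⁻¹ • (Tg 1 * a) := by
  rw [hgg, eq_sub_of_add_eq (hsum 1), sub_mul, one_mul, ← two_smul_tg_one_mul_tg hsum hge hgg a,
    smul_smul, inv_mul_cancel₀ hchar, one_smul]

theorem tg_tg_one (hchar : (2 : k) ≠ 0) (hsum : ∀ a : A, Te a + Tg a = a)
    (hge : ∀ a : A, Tg (Te a) = Tg 1 * Te a) (hgg : ∀ a : A, Tg (Tg a) = Te 1 * Tg a) :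
    Tg (Tg 1 : A) = (2 : k)⁻¹ • Tg 1 := by
  rw [tg_tg hchar hsum hge hgg, mul_one]
  match_scalars
  field_simp
  ring

theorem tg_cubic_eq_zero (hchar : (2 : k) ≠ 0) (hsum : ∀ a : A, Te a + Tg a = a)
    (hmul_g : ∀ a b : A, Tg (a * b) = Te a * Tg b + Tg a * Te b)
    (hge : ∀ a : A, Tg (Te a) = Tg 1 * Te a) (hgg : ∀ a : A, Tg (Tg a) = Te 1 * Tg a) (a : A) :
    (2 : k) • Tg (Tg (Tg a)) - (3 : k) • Tg (Tg a) + Tg a = 0 := by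
  have hTT := tg_tg hchar hsum hge hgg a
  have hTea : Tg (Tg 1 * a) = (2 : k)⁻¹ • (Tg 1 * a) :=
    tg_mul_eq_half_smul_of_left hchar hsum hmul_g (tg_tg_one hchar hsum hge hgg) a
  rw [hTT, map_sub, map_smul, hTea, hTT]
  match_scalars <;> field_simp <;> ring

theorem commute_tg_one (hsum : ∀ a : A, Te a + Tg a = a)
    (hge : ∀ a : A, Tg (Te a) = Tg 1 * Te a) (hge' : ∀ a : A, Tg (Te a) = Te a * Tg 1)
    (hgg : ∀ a : A, Tg (Tg a) = Te 1 * Tg a) (hgg' : ∀ a : A, Tg (Tg a) = Tg a * Te 1) (a : A) :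
    Commute (Tg 1) a := by
  have hTe1 : Commute (Te 1) (Tg a) := (hgg a).symm.trans (hgg' a)
  rw [← hsum a]
  refine .add_right ((hge a).symm.trans (hge' a)) ?_
  simpa [eq_sub_of_add_eq (hsum 1)] using (Commute.one_left (Tg a)).sub_left hTe1

theorem isIdempotentElem_two_smul_tg_one (hsum : ∀ a : A, Te a + Tg a = a)
    (hge : ∀ a : A, Tg (Te a) = Tg 1 * Te a) (hgg : ∀ a : A, Tg (Tg a) = Te 1 * Tg a) :
    IsIdempotentElem ((2 : k) • Tg 1) := by
  have h := two_smul_tg_one_mul_tg hsum hge hgg 1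
  rw [mul_one] at h
  rw [IsIdempotentElem, smul_mul_smul_comm, ← smul_smul, h]

end PartialGrading

theorem partial_Z2_grading_structure_general
    (k : Type*) [Field k] (hchar : (2 : k) ≠ 0)
    (A : Type*) [Ring A] [Algebra k A]
    (Te Tg : A →ₗ[k] A)
    (hsum : ∀ a : A, Te a + Tg a = a)
    (hmul_g : ∀ a b : A, Tg (a * b) = Te a * Tg b + Tg a * Te b)
    (hge : ∀ a : A, Tg (Te a) = Tg 1 * Te a) (hge' : ∀ a : A, Tg (Te a) = Te a * Tg 1)
    (hgg : ∀ a : A, Tg (Tg a) = Te 1 * Tg a) (hgg' : ∀ a : A, Tg (Tg a) = Tg a * Te 1) :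
    -- eigenspace decomposition `A = A₀ ⊕ A₁ ⊕ A_{1/2}`
    (∀ a : A, ∃! t : A × A × A,
      t.1 ∈ LinearMap.ker Tg ∧
      t.2.1 ∈ LinearMap.ker (Tg - LinearMap.id) ∧
      t.2.2 ∈ LinearMap.ker (Tg - (2 : k)⁻¹ • LinearMap.id) ∧
      a = t.1 + t.2.1 + t.2.2) ∧
    -- (1) `B = A₀ ⊕ A₁` is a `ℤ₂`-graded subalgebra
    ((∀ a b : A, a ∈ LinearMap.ker Tg → b ∈ LinearMap.ker Tg →
        a * b ∈ LinearMap.ker Tg) ∧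
      (∀ a b : A, a ∈ LinearMap.ker Tg → b ∈ LinearMap.ker (Tg - LinearMap.id) →
        a * b ∈ LinearMap.ker (Tg - LinearMap.id)) ∧
      (∀ a b : A, a ∈ LinearMap.ker (Tg - LinearMap.id) → b ∈ LinearMap.ker Tg →
        a * b ∈ LinearMap.ker (Tg - LinearMap.id)) ∧
      (∀ a b : A, a ∈ LinearMap.ker (Tg - LinearMap.id) →
        b ∈ LinearMap.ker (Tg - LinearMap.id) → a * b ∈ LinearMap.ker Tg)) ∧
    -- (2) `A_{1/2}` is a two-sided ideal
    (∀ (a x : A), a ∈ LinearMap.ker (Tg - (2 : k)⁻¹ • LinearMap.id) →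
      x * a ∈ LinearMap.ker (Tg - (2 : k)⁻¹ • LinearMap.id) ∧
      a * x ∈ LinearMap.ker (Tg - (2 : k)⁻¹ • LinearMap.id)) ∧
    -- (3) and (4)
    (∃ u v : A, u ∈ LinearMap.ker Tg ∧
      v ∈ LinearMap.ker (Tg - (2 : k)⁻¹ • LinearMap.id) ∧
      u + v = 1 ∧ u * u = u ∧ v * v = v ∧ u * v = 0 ∧ v * u = 0 ∧
      (∀ a : A, u * a * v = 0 ∧ v * a * u = 0 ∧ u * a = a * u ∧ v * a = a * v)) := by
  refine ⟨existsUnique_eigen_decomposition_of_cubic hchar Tg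
    (tg_cubic_eq_zero hchar hsum hmul_g hge hgg), ?_, ?_, ?_⟩
  · simp_rw [mem_ker_sub_id_iff, LinearMap.mem_ker]
    exact ⟨fun _ _ => tg_mul_eq_zero hmul_g,
      fun _ _ => tg_mul_eq_mul_of_eq_zero_of_eq_self hsum hmul_g,
      fun _ _ => tg_mul_eq_mul_of_eq_self_of_eq_zero hsum hmul_g,
      fun _ _ => tg_mul_eq_zero_of_eq_self hsum hmul_g⟩
  · simp only [mem_ker_sub_smul_id_iff]
    exact fun a x ha => ⟨tg_mul_eq_half_smul_of_right hchar hsum hmul_g ha x,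
      tg_mul_eq_half_smul_of_left hchar hsum hmul_g ha x⟩
  · set v : A := (2 : k) • Tg 1
    have hv : IsIdempotentElem v := isIdempotentElem_two_smul_tg_one hsum hge hgg
    have hcomm (a : A) : Commute v a := (commute_tg_one hsum hge hge' hgg hgg' a).smul_left _
    have hcomm' (a : A) : Commute (1 - v) a := (Commute.one_left a).sub_left (hcomm a)
    have hTv : Tg v = (2 : k)⁻¹ • v := by
      rw [map_smul, tg_tg_one hchar hsum hge hgg, smul_comm]
    refine ⟨1 - v, v, ?_, mem_ker_sub_smul_id_iff.2 hTv, sub_add_cancel 1 v, hv.one_sub, hv,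
      hv.one_sub_mul_self, hv.mul_one_sub_self, fun a => ⟨?_, ?_, ?_, (hcomm a).eq⟩⟩
    · rw [LinearMap.mem_ker, map_sub, hTv, smul_smul, inv_mul_cancel₀ hchar, one_smul, sub_self]
    · exact (hcomm' a).mul_mul_eq_zero hv.one_sub_mul_self
    · exact (hcomm a).mul_mul_eq_zero hv.mul_one_sub_self
    · exact (hcomm' a).eq

/-- Structure of partially `ℤ₂`-graded algebras.  A partial `ℤ₂`-grading of
`A` (a partial action of `(kC₂)*`) is given by the operators `Te = p_e·-`, `Tg = p_g·-`.
Decomposing `A = A₀ ⊕ A₁ ⊕ A_{1/2}` into the eigenspaces of `Tg` for `0`, `1`, `1/2`: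
(1) `B = A₀ ⊕ A₁` is a `ℤ₂`-graded subalgebra, (2) `A_{1/2}` is an ideal,
(3) `1 = u + v` with `u ∈ A₀`, `v ∈ A_{1/2}` orthogonal idempotents, and
(4) `uAv = vAu = 0` and `u, v` are central, so `A ≅ B × A_{1/2}` as algebras. -/
theorem partial_Z2_grading_structure
    (k : Type*) [Field k] (hchar : (2 : k) ≠ 0)
    (A : Type*) [Ring A] [Algebra k A]
    (Te Tg : A →ₗ[k] A)
    (hsum : ∀ a : A, Te a + Tg a = a)
    (hmul_e : ∀ a b : A, Te (a * b) = Te a * Te b + Tg a * Tg b)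
    (hmul_g : ∀ a b : A, Tg (a * b) = Te a * Tg b + Tg a * Te b)
    (hee : ∀ a : A, Te (Te a) = Te 1 * Te a) (hee' : ∀ a : A, Te (Te a) = Te a * Te 1)
    (heg : ∀ a : A, Te (Tg a) = Tg 1 * Tg a) (heg' : ∀ a : A, Te (Tg a) = Tg a * Tg 1)
    (hge : ∀ a : A, Tg (Te a) = Tg 1 * Te a) (hge' : ∀ a : A, Tg (Te a) = Te a * Tg 1)
    (hgg : ∀ a : A, Tg (Tg a) = Te 1 * Tg a) (hgg' : ∀ a : A, Tg (Tg a) = Tg a * Te 1) :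
    -- eigenspace decomposition `A = A₀ ⊕ A₁ ⊕ A_{1/2}`
    (∀ a : A, ∃! t : A × A × A,
      t.1 ∈ LinearMap.ker Tg ∧
      t.2.1 ∈ LinearMap.ker (Tg - LinearMap.id) ∧
      t.2.2 ∈ LinearMap.ker (Tg - (2 : k)⁻¹ • LinearMap.id) ∧
      a = t.1 + t.2.1 + t.2.2) ∧
    -- (1) `B = A₀ ⊕ A₁` is a `ℤ₂`-graded subalgebra
    ((∀ a b : A, a ∈ LinearMap.ker Tg → b ∈ LinearMap.ker Tg →
        a * b ∈ LinearMap.ker Tg) ∧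
      (∀ a b : A, a ∈ LinearMap.ker Tg → b ∈ LinearMap.ker (Tg - LinearMap.id) →
        a * b ∈ LinearMap.ker (Tg - LinearMap.id)) ∧
      (∀ a b : A, a ∈ LinearMap.ker (Tg - LinearMap.id) → b ∈ LinearMap.ker Tg →
        a * b ∈ LinearMap.ker (Tg - LinearMap.id)) ∧
      (∀ a b : A, a ∈ LinearMap.ker (Tg - LinearMap.id) →
        b ∈ LinearMap.ker (Tg - LinearMap.id) → a * b ∈ LinearMap.ker Tg)) ∧
    -- (2) `A_{1/2}` is a two-sided ideal
    (∀ (a x : A), a ∈ LinearMap.ker (Tg - (2 : k)⁻¹ • LinearMap.id) →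
      x * a ∈ LinearMap.ker (Tg - (2 : k)⁻¹ • LinearMap.id) ∧
      a * x ∈ LinearMap.ker (Tg - (2 : k)⁻¹ • LinearMap.id)) ∧
    -- (3) and (4)
    (∃ u v : A, u ∈ LinearMap.ker Tg ∧
      v ∈ LinearMap.ker (Tg - (2 : k)⁻¹ • LinearMap.id) ∧
      u + v = 1 ∧ u * u = u ∧ v * v = v ∧ u * v = 0 ∧ v * u = 0 ∧
      (∀ a : A, u * a * v = 0 ∧ v * a * u = 0 ∧ u * a = a * u ∧ v * a = a * v)) :=
  partial_Z2_grading_structure_general k hchar A Te Tg hsum hmul_g hge hge' hgg hgg'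
end

section
/- Let k be a field of characteristic ≠ 2, V a k-vector space, and T ∈ End(V). Then the assignment p_g ↦ T, p_e ↦ id_V − T extends to a partial representation of (kC₂)* on V if and only if T(2T − id)(T − id) = 0, i.e. the minimal polynomial of T divides x(2x−1)(x−1). -/
/-!
Every expression in the eight conditions is a polynomial in `T`, and these commute. Writing
`E = 1 - T`, each condition says that a difference vanishes, and each such difference equals
`±T(2T - 1)(T - 1)`; for instance `E(E² + T²) - E² = E(E² + T² - E) = E · T(2T - 1)`.
-/

section

variable {R : Type*} [Ring R]

theorem eq_iff_eq_zero_of_sub_eq {a b c : R} (h : a - b = c) : a = b ↔ c = 0 := by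
  rw [← sub_eq_zero, h]

theorem eq_iff_eq_zero_of_sub_eq_neg {a b c : R} (h : a - b = -c) : a = b ↔ c = 0 := by
  rw [← sub_eq_zero, h, neg_eq_zero]

theorem partialRep_conditions_iff (t : R) :
    ((1 - t) * ((1 - t) * (1 - t) + t * t) = (1 - t) * (1 - t) ∧
      t * ((1 - t) * (1 - t) + t * t) = t * t ∧
      (1 - t) * ((1 - t) * t + t * (1 - t)) = (1 - t) * t ∧
      t * ((1 - t) * t + t * (1 - t)) = t * (1 - t) ∧
      ((1 - t) * (1 - t) + t * t) * (1 - t) = (1 - t) * (1 - t) ∧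
      ((1 - t) * (1 - t) + t * t) * t = t * t ∧
      ((1 - t) * t + t * (1 - t)) * (1 - t) = t * (1 - t) ∧
      ((1 - t) * t + t * (1 - t)) * t = (1 - t) * t)
    ↔ t * ((2 * t - 1) * (t - 1)) = 0 := by
  set c := t * ((2 * t - 1) * (t - 1))
  calc _ ↔ c = 0 ∧ c = 0 ∧ c = 0 ∧ c = 0 ∧ c = 0 ∧ c = 0 ∧ c = 0 ∧ c = 0 :=
        (eq_iff_eq_zero_of_sub_eq_neg (by simp only [c]; noncomm_ring)).and <|
        (eq_iff_eq_zero_of_sub_eq (by simp only [c]; noncomm_ring)).and <|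
        (eq_iff_eq_zero_of_sub_eq (by simp only [c]; noncomm_ring)).and <|
        (eq_iff_eq_zero_of_sub_eq_neg (by simp only [c]; noncomm_ring)).and <|
        (eq_iff_eq_zero_of_sub_eq_neg (by simp only [c]; noncomm_ring)).and <|
        (eq_iff_eq_zero_of_sub_eq (by simp only [c]; noncomm_ring)).and <|
        (eq_iff_eq_zero_of_sub_eq (by simp only [c]; noncomm_ring)).and <|
        eq_iff_eq_zero_of_sub_eq_neg (by simp only [c]; noncomm_ring)
    _ ↔ c = 0 := by simp only [and_self]

end

theorem partialRep_of_dual_C2_iff_cubic_general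
    (k : Type*) [Field k]
    (V : Type*) [AddCommGroup V] [Module k V] (T : V →ₗ[k] V) :
    -- `Te := id - T`, `Tg := T`; the partial representation conditions are:
    (((LinearMap.id - T) ∘ₗ ((LinearMap.id - T) ∘ₗ (LinearMap.id - T) + T ∘ₗ T) =
        (LinearMap.id - T) ∘ₗ (LinearMap.id - T)) ∧
      (T ∘ₗ ((LinearMap.id - T) ∘ₗ (LinearMap.id - T) + T ∘ₗ T) = T ∘ₗ T) ∧
      ((LinearMap.id - T) ∘ₗ ((LinearMap.id - T) ∘ₗ T + T ∘ₗ (LinearMap.id - T)) =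
        (LinearMap.id - T) ∘ₗ T) ∧
      (T ∘ₗ ((LinearMap.id - T) ∘ₗ T + T ∘ₗ (LinearMap.id - T)) = T ∘ₗ (LinearMap.id - T)) ∧
      (((LinearMap.id - T) ∘ₗ (LinearMap.id - T) + T ∘ₗ T) ∘ₗ (LinearMap.id - T) =
        (LinearMap.id - T) ∘ₗ (LinearMap.id - T)) ∧
      (((LinearMap.id - T) ∘ₗ (LinearMap.id - T) + T ∘ₗ T) ∘ₗ T = T ∘ₗ T) ∧
      (((LinearMap.id - T) ∘ₗ T + T ∘ₗ (LinearMap.id - T)) ∘ₗ (LinearMap.id - T) =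
        T ∘ₗ (LinearMap.id - T)) ∧
      (((LinearMap.id - T) ∘ₗ T + T ∘ₗ (LinearMap.id - T)) ∘ₗ T =
        (LinearMap.id - T) ∘ₗ T))
    ↔ T ∘ₗ ((2 : k) • T - LinearMap.id) ∘ₗ (T - LinearMap.id) = 0 := by
  simp only [← Module.End.mul_eq_comp, ← Module.End.one_eq_id, two_smul, ← two_mul]
  exact partialRep_conditions_iff T

/-- Let `k` be a field with `char k ≠ 2`, `V` a `k`-vector space and
`T ∈ End(V)`.  The assignment `p_g ↦ T`, `p_e ↦ id - T` extends to a partial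
representation of `(kC₂)*` on `V` (i.e. the axioms (PR1), (PR2), (PR5) written out on the
basis `{p_e, p_g}` hold, with `S = id`) if and only if `T(2T - id)(T - id) = 0`, i.e.
the minimal polynomial of `T` divides `x(2x-1)(x-1)`. -/
theorem partialRep_of_dual_C2_iff_cubic
    (k : Type*) [Field k] (hchar : (2 : k) ≠ 0)
    (V : Type*) [AddCommGroup V] [Module k V] (T : V →ₗ[k] V) :
    -- `Te := id - T`, `Tg := T`; the partial representation conditions are:
    (((LinearMap.id - T) ∘ₗ ((LinearMap.id - T) ∘ₗ (LinearMap.id - T) + T ∘ₗ T) =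
        (LinearMap.id - T) ∘ₗ (LinearMap.id - T)) ∧
      (T ∘ₗ ((LinearMap.id - T) ∘ₗ (LinearMap.id - T) + T ∘ₗ T) = T ∘ₗ T) ∧
      ((LinearMap.id - T) ∘ₗ ((LinearMap.id - T) ∘ₗ T + T ∘ₗ (LinearMap.id - T)) =
        (LinearMap.id - T) ∘ₗ T) ∧
      (T ∘ₗ ((LinearMap.id - T) ∘ₗ T + T ∘ₗ (LinearMap.id - T)) = T ∘ₗ (LinearMap.id - T)) ∧
      (((LinearMap.id - T) ∘ₗ (LinearMap.id - T) + T ∘ₗ T) ∘ₗ (LinearMap.id - T) =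
        (LinearMap.id - T) ∘ₗ (LinearMap.id - T)) ∧
      (((LinearMap.id - T) ∘ₗ (LinearMap.id - T) + T ∘ₗ T) ∘ₗ T = T ∘ₗ T) ∧
      (((LinearMap.id - T) ∘ₗ T + T ∘ₗ (LinearMap.id - T)) ∘ₗ (LinearMap.id - T) =
        T ∘ₗ (LinearMap.id - T)) ∧
      (((LinearMap.id - T) ∘ₗ T + T ∘ₗ (LinearMap.id - T)) ∘ₗ T =
        (LinearMap.id - T) ∘ₗ T))
    ↔ T ∘ₗ ((2 : k) • T - LinearMap.id) ∘ₗ (T - LinearMap.id) = 0 :=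
  partialRep_of_dual_C2_iff_cubic_general k V T
end
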